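/- arXiv:2408.01339 — 12 statements merged into one kernel-verified Lean document; each statement's English description precedes it below -/
import Mathlib

section
/- Assume H_X H_Zᵀ = 0 and H_X Sᵀ = T H_G. Then the check matrices of the measurement-sticker deformed code are compatible: H^{MM}_X (H^{MM}_Z)ᵀ = 0. -/
open Matrix

/-- The `X`-check matrix of the measurement-sticker deformed code, with `d_R = m + 1`.
Column blocks: `u_0` (`Fin n`), `u_1,…,u_m` (`Fin m × Fin nG`, index `j0` is `u_{j0+1}`),
`v_1,…,v_{m+1}` (`Fin (m+1) × Fin rG`, index `i0` is `v_{i0+1}`). -/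
def HMMX (m : ℕ) {n nG rX rG : ℕ} (HX : Matrix (Fin rX) (Fin n) (ZMod 2))
    (HG : Matrix (Fin rG) (Fin nG) (ZMod 2))
    (T : Matrix (Fin rX) (Fin rG) (ZMod 2)) :
    Matrix (Fin rX ⊕ Fin m × Fin rG)
      (Fin n ⊕ (Fin m × Fin nG ⊕ Fin (m + 1) × Fin rG)) (ZMod 2) :=
  Matrix.of fun r c =>
    match r, c with
    | Sum.inl a, Sum.inl j => HX a j
    | Sum.inl _, Sum.inr (Sum.inl _) => 0
    | Sum.inl a, Sum.inr (Sum.inr (i, b)) => if (i : ℕ) = 0 then T a b else 0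
    | Sum.inr _, Sum.inl _ => 0
    | Sum.inr (j0, a), Sum.inr (Sum.inl (j', c')) => if j' = j0 then HG a c' else 0
    | Sum.inr (j0, a), Sum.inr (Sum.inr (i, b)) =>
        if ((i : ℕ) = (j0 : ℕ) ∨ (i : ℕ) = (j0 : ℕ) + 1) ∧ b = a then 1 else 0

/-- The `Z`-check matrix of the measurement-sticker deformed code, with `d_R = m + 1`.
Row blocks: memory `Z` checks (`Fin rZ`) and sticker `Z` checks `i = 1,…,m+1`
(`Fin (m+1) × Fin nG`, index `i0` is check row `i0+1`). -/
def HMMZ (m : ℕ) {n nG rZ rG : ℕ} (HZ : Matrix (Fin rZ) (Fin n) (ZMod 2))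
    (HG : Matrix (Fin rG) (Fin nG) (ZMod 2))
    (S : Matrix (Fin nG) (Fin n) (ZMod 2)) :
    Matrix (Fin rZ ⊕ Fin (m + 1) × Fin nG)
      (Fin n ⊕ (Fin m × Fin nG ⊕ Fin (m + 1) × Fin rG)) (ZMod 2) :=
  Matrix.of fun r c =>
    match r, c with
    | Sum.inl a, Sum.inl j => HZ a j
    | Sum.inl _, Sum.inr _ => 0
    | Sum.inr (i, cc), Sum.inl j => if (i : ℕ) = 0 then S cc j else 0
    | Sum.inr (i, cc), Sum.inr (Sum.inl (j0, c')) =>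
        if ((j0 : ℕ) + 1 = (i : ℕ) ∨ (j0 : ℕ) = (i : ℕ)) ∧ c' = cc then 1 else 0
    | Sum.inr (i, cc), Sum.inr (Sum.inr (i', b)) =>
        if (i' : ℕ) = (i : ℕ) then HG b cc else 0

/-- the check matrices of the measurement-sticker deformed code are
compatible. -/
theorem HMMX_mul_HMMZ_transpose_eq_zero (m : ℕ) (hm : 1 ≤ m)
    {n nG rX rZ rG : ℕ}
    (HX : Matrix (Fin rX) (Fin n) (ZMod 2))
    (HZ : Matrix (Fin rZ) (Fin n) (ZMod 2))
    (HG : Matrix (Fin rG) (Fin nG) (ZMod 2))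
    (S : Matrix (Fin nG) (Fin n) (ZMod 2))
    (T : Matrix (Fin rX) (Fin rG) (ZMod 2))
    (hMem : HX * HZᵀ = 0)
    (hcompat : HX * Sᵀ = T * HG) :
    HMMX m HX HG T * (HMMZ m HZ HG S)ᵀ = 0 := by

  ext r s
  rw [Matrix.mul_apply, Matrix.zero_apply, Fintype.sum_sum_type, Fintype.sum_sum_type]
  rcases r with a | ⟨j0, a⟩ <;> rcases s with a' | ⟨i, cc⟩ <;>
    simp only [HMMX, HMMZ, Matrix.of_apply, Matrix.transpose_apply, Fintype.sum_prod_type,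
      mul_zero, zero_mul, Finset.sum_const_zero, add_zero, zero_add, mul_ite, ite_mul,
      mul_one, one_mul, mul_zero, zero_mul]
  · have h := congrFun (congrFun hMem a) a'
    simpa [Matrix.mul_apply] using h
  · simp only [ite_self, Finset.sum_const_zero, zero_add]
    simp only [Fin.val_eq_val] at *
    simp only [Finset.sum_ite_irrel, Finset.sum_const_zero, Finset.sum_ite_eq',
      Finset.mem_univ, if_true]
    have h := congrFun (congrFun hcompat a) cc
    simp only [Matrix.mul_apply, Matrix.transpose_apply] at h
    split_ifs with h0
    · rw [h]; exact CharTwo.add_self_eq_zero _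
    · simp
  · simp only [ite_self, Finset.sum_const_zero, zero_add]
    simp only [Fin.val_eq_val] at *
    simp only [ite_and, Finset.sum_ite_irrel, Finset.sum_const_zero, Finset.sum_ite_eq',
      Finset.mem_univ, if_true]
    have e1 : ∀ x : Fin m, (if (x:ℕ) + 1 = (i:ℕ) ∨ (x:ℕ) = (i:ℕ) then if x = j0 then HG a cc else 0 else 0)
        = (if x = j0 then (if (j0:ℕ) + 1 = (i:ℕ) ∨ (j0:ℕ) = (i:ℕ) then HG a cc else 0) else 0) := by
      intro x; by_cases hx : x = j0 <;> simp [hx]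
    simp only [e1, Finset.sum_ite_eq', Finset.mem_univ, if_true]
    have hco : ((j0:ℕ) + 1 = (i:ℕ) ∨ (j0:ℕ) = (i:ℕ)) = ((i:ℕ) = (j0:ℕ) ∨ (i:ℕ) = (j0:ℕ) + 1) := by
      apply propext; constructor <;> rintro (h|h) <;> omega
    simp only [hco]
    split_ifs <;> simp [CharTwo.add_self_eq_zero]
end

section
/- Assume H_X H_Zᵀ = 0 and H_X Sᵀ = T H_G. Then the check matrices of the branch-sticker deformed code are compatible: H^{MB}_X (H^{MB}_Z)ᵀ = 0. -/
open Matrix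

/-- The `X`-check matrix of the branch-sticker deformed code, with `d_R = m + 1`.
Column blocks: `u_0` (`Fin n`), `u_1,…,u_m` (`Fin m × Fin nG`, index `j0` is `u_{j0+1}`;
`u_m = u_{d_R-1}` is the open boundary), `v_1,…,v_m` (`Fin m × Fin rG`, index `i0` is
`v_{i0+1}`). -/
def HMBX (m : ℕ) {n nG rX rG : ℕ} (HX : Matrix (Fin rX) (Fin n) (ZMod 2))
    (HG : Matrix (Fin rG) (Fin nG) (ZMod 2))
    (T : Matrix (Fin rX) (Fin rG) (ZMod 2)) :
    Matrix (Fin rX ⊕ Fin m × Fin rG)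
      (Fin n ⊕ (Fin m × Fin nG ⊕ Fin m × Fin rG)) (ZMod 2) :=
  Matrix.of fun r c =>
    match r, c with
    | Sum.inl a, Sum.inl j => HX a j
    | Sum.inl _, Sum.inr (Sum.inl _) => 0
    | Sum.inl a, Sum.inr (Sum.inr (i, b)) => if (i : ℕ) = 0 then T a b else 0
    | Sum.inr _, Sum.inl _ => 0
    | Sum.inr (j0, a), Sum.inr (Sum.inl (j', c')) => if j' = j0 then HG a c' else 0
    | Sum.inr (j0, a), Sum.inr (Sum.inr (i, b)) =>
        if ((i : ℕ) = (j0 : ℕ) ∨ (i : ℕ) = (j0 : ℕ) + 1) ∧ b = a then 1 else 0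

/-- The `Z`-check matrix of the branch-sticker deformed code, with `d_R = m + 1`.
Row blocks: memory `Z` checks (`Fin rZ`) and sticker `Z` checks `i = 1,…,m`
(`Fin m × Fin nG`, index `i0` is check row `i0+1`). -/
def HMBZ (m : ℕ) {n nG rZ rG : ℕ} (HZ : Matrix (Fin rZ) (Fin n) (ZMod 2))
    (HG : Matrix (Fin rG) (Fin nG) (ZMod 2))
    (S : Matrix (Fin nG) (Fin n) (ZMod 2)) :
    Matrix (Fin rZ ⊕ Fin m × Fin nG)
      (Fin n ⊕ (Fin m × Fin nG ⊕ Fin m × Fin rG)) (ZMod 2) :=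
  Matrix.of fun r c =>
    match r, c with
    | Sum.inl a, Sum.inl j => HZ a j
    | Sum.inl _, Sum.inr _ => 0
    | Sum.inr (i, cc), Sum.inl j => if (i : ℕ) = 0 then S cc j else 0
    | Sum.inr (i, cc), Sum.inr (Sum.inl (j0, c')) =>
        if ((j0 : ℕ) + 1 = (i : ℕ) ∨ (j0 : ℕ) = (i : ℕ)) ∧ c' = cc then 1 else 0
    | Sum.inr (i, cc), Sum.inr (Sum.inr (i', b)) =>
        if (i' : ℕ) = (i : ℕ) then HG b cc else 0

/-- the check matrices of the branch-sticker deformed code are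
compatible. -/
theorem HMBX_mul_HMBZ_transpose_eq_zero (m : ℕ) (hm : 1 ≤ m)
    {n nG rX rZ rG : ℕ}
    (HX : Matrix (Fin rX) (Fin n) (ZMod 2))
    (HZ : Matrix (Fin rZ) (Fin n) (ZMod 2))
    (HG : Matrix (Fin rG) (Fin nG) (ZMod 2))
    (S : Matrix (Fin nG) (Fin n) (ZMod 2))
    (T : Matrix (Fin rX) (Fin rG) (ZMod 2))
    (hMem : HX * HZᵀ = 0)
    (hcompat : HX * Sᵀ = T * HG) :
    HMBX m HX HG T * (HMBZ m HZ HG S)ᵀ = 0 := by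
  ext r c
  rcases r with a | ⟨j0, a⟩ <;> rcases c with a' | ⟨i, cc⟩ <;>
    simp only [mul_apply, transpose_apply, HMBX, HMBZ, of_apply, Matrix.zero_apply,
      Fintype.sum_sum_type, Fintype.sum_prod_type, mul_zero, zero_mul, mul_ite, ite_mul,
      mul_one, one_mul, Finset.sum_const_zero, add_zero, zero_add]
  · have h := congrFun (congrFun hMem a) a'
    simpa [Matrix.mul_apply] using h
  · have h2 := congrFun (congrFun hcompat a) cc
    simp only [Matrix.mul_apply, Matrix.transpose_apply] at h2
    by_cases hi : (i:ℕ) = 0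
    · have : i = ⟨0, hm⟩ := Fin.ext hi
      subst this
      simp [Fin.val_eq_val, Finset.sum_ite_eq', h2, ← Finset.sum_add_distrib,
        CharTwo.add_self_eq_zero]
      have h0 : ∀ x : Fin m, ((x:ℕ) = 0) ↔ x = ⟨0, hm⟩ := fun x =>
        ⟨fun h => Fin.ext h, fun h => by simp [h]⟩
      simp [h0, Finset.sum_ite_eq', CharTwo.add_self_eq_zero]
    · simp [hi, Fin.val_eq_val]
  · simp [Fin.val_eq_val, Finset.sum_ite_eq', Finset.sum_ite_eq]
    have e1 : (∑ x : Fin m, ∑ x_1 : Fin nG,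
        if ((x:ℕ) + 1 = (i:ℕ) ∨ x = i) ∧ x_1 = cc then if x = j0 then HG a x_1 else 0 else 0)
        = if ((j0:ℕ) + 1 = (i:ℕ) ∨ j0 = i) then HG a cc else 0 := by
      rw [Finset.sum_eq_single j0]
      · simp [ite_and, Finset.sum_ite_eq']
      · intro b _ hb
        simp [hb, ite_and]
      · simp
    have e2 : (∑ x : Fin rG, if (i = j0 ∨ (i:ℕ) = (j0:ℕ) + 1) ∧ x = a then HG x cc else 0)
        = if (i = j0 ∨ (i:ℕ) = (j0:ℕ) + 1) then HG a cc else 0 := by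
      simp [ite_and, Finset.sum_ite_eq']
    rw [e1, e2]
    have hiff : (((j0:ℕ) + 1 = (i:ℕ) ∨ j0 = i)) ↔ (i = j0 ∨ (i:ℕ) = (j0:ℕ) + 1) := by
      constructor <;> rintro (h | h)
      · exact Or.inr h.symm
      · exact Or.inl h.symm
      · exact Or.inr h.symm
      · exact Or.inl h.symm
    rw [if_congr hiff rfl rfl]
    split_ifs <;> simp [CharTwo.add_self_eq_zero]
end

section
/- Let J_{X,C}, J_{Z,C} ∈ 𝔽₂^{(k−q)×n} and γ ∈ 𝔽₂^{(k−q)×r_G} satisfy H_X J_{Z,C}ᵀ = 0, H_Z J_{X,C}ᵀ = 0, J_{X,C} J_{Z,C}ᵀ = E_{k−q}, and J_{X,C} Sᵀ = γ H_G. Then the logical generator matrices of the measurement-sticker deformed code are valid: H^{MM}_X (J^{MM}_Z)ᵀ = 0, H^{MM}_Z (J^{MM}_X)ᵀ = 0, and J^{MM}_X (J^{MM}_Z)ᵀ = E_{k−q}. -/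
open Matrix

/-- The `X` logical generator matrix of the measurement-sticker deformed code:
`J_{X,C}` in block `u_0`, `J_{X,C}Sᵀ` in each block `u_j`, `γ` in block `v_{d_R}`. -/
def JMMX (m : ℕ) {n nG rG p : ℕ} (JXC : Matrix (Fin p) (Fin n) (ZMod 2))
    (S : Matrix (Fin nG) (Fin n) (ZMod 2))
    (γ : Matrix (Fin p) (Fin rG) (ZMod 2)) :
    Matrix (Fin p) (Fin n ⊕ (Fin m × Fin nG ⊕ Fin (m + 1) × Fin rG)) (ZMod 2) :=
  Matrix.of fun a c =>
    match c with
    | Sum.inl j => JXC a j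
    | Sum.inr (Sum.inl (_, c')) => (JXC * Sᵀ) a c'
    | Sum.inr (Sum.inr (i, b)) => if (i : ℕ) = m then γ a b else 0

/-- The `Z` logical generator matrix of the measurement-sticker deformed code:
`J_{Z,C}` in block `u_0`, zero elsewhere. -/
def JMMZ (m nG rG : ℕ) {n p : ℕ} (JZC : Matrix (Fin p) (Fin n) (ZMod 2)) :
    Matrix (Fin p) (Fin n ⊕ (Fin m × Fin nG ⊕ Fin (m + 1) × Fin rG)) (ZMod 2) :=
  Matrix.of fun a c =>
    match c with
    | Sum.inl j => JZC a j
    | Sum.inr _ => 0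


lemma sum_ite_val {M : Type*} [AddCommMonoid M] (m k : ℕ) (x : M) :
    (∑ j : Fin m, if (j : ℕ) = k then x else 0) = if k < m then x else 0 := by
  rw [Fin.sum_univ_eq_sum_range (fun j => if j = k then x else 0)]
  simp [Finset.sum_ite_eq' (Finset.range m) k (fun _ => x)]

lemma key (m : ℕ) (hm : 1 ≤ m) {n nG rG p : ℕ}
    (HG : Matrix (Fin rG) (Fin nG) (ZMod 2))
    (S : Matrix (Fin nG) (Fin n) (ZMod 2))
    (JXC : Matrix (Fin p) (Fin n) (ZMod 2))
    (γ : Matrix (Fin p) (Fin rG) (ZMod 2))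
    (h4 : JXC * Sᵀ = γ * HG)
    (i : Fin (m+1)) (cc : Fin nG) (b : Fin p) :
    (∑ j : Fin n, (if (i : ℕ) = 0 then S cc j else 0) * JXC b j)
    + ((∑ jc : Fin m × Fin nG,
        (if ((jc.1 : ℕ) + 1 = (i : ℕ) ∨ (jc.1 : ℕ) = (i : ℕ)) ∧ jc.2 = cc then (1:ZMod 2) else 0)
          * (JXC * Sᵀ) b jc.2)
    + (∑ ib : Fin (m+1) × Fin rG,
        (if ((ib.1 : ℕ)) = (i : ℕ) then HG ib.2 cc else 0)
          * (if (ib.1 : ℕ) = m then γ b ib.2 else 0))) = 0 := by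
  set X : ZMod 2 := (JXC * Sᵀ) b cc with hX
  have hXX : X + X = 0 := by
    have h2 : (2 : ZMod 2) = 0 := rfl
    linear_combination X * h2
  have hilt := i.isLt
  -- the u0-block sum
  have hA : (∑ j : Fin n, (if (i : ℕ) = 0 then S cc j else 0) * JXC b j)
      = if (i:ℕ) = 0 then X else 0 := by
    by_cases h0 : (i:ℕ) = 0 <;>
      simp [h0, hX, mul_apply, transpose_apply, mul_comm]
  -- the u-block sum
  have hB : (∑ jc : Fin m × Fin nG,
        (if ((jc.1 : ℕ) + 1 = (i : ℕ) ∨ (jc.1 : ℕ) = (i : ℕ)) ∧ jc.2 = cc then (1:ZMod 2) else 0)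
          * (JXC * Sᵀ) b jc.2)
      = ((if 1 ≤ (i:ℕ) then X else 0) + if (i:ℕ) < m then X else 0) := by
    rw [Fintype.sum_prod_type]
    have step : ∀ j0 : Fin m, (∑ c' : Fin nG,
        (if ((j0 : ℕ) + 1 = (i : ℕ) ∨ (j0 : ℕ) = (i : ℕ)) ∧ c' = cc then (1:ZMod 2) else 0)
          * (JXC * Sᵀ) b c')
        = (if (j0:ℕ) + 1 = (i:ℕ) then X else 0) + (if (j0:ℕ) = (i:ℕ) then X else 0) := by
      intro j0
      by_cases hA : (j0:ℕ) + 1 = (i:ℕ) <;> by_cases hB' : (j0:ℕ) = (i:ℕ)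
      · exact absurd hB' (by omega)
      · simp [hA, hB', Finset.sum_ite_eq' Finset.univ cc, hX]
      · simp [hA, hB', Finset.sum_ite_eq' Finset.univ cc, hX]
      · simp [hA, hB']
    rw [Finset.sum_congr rfl (fun j0 _ => step j0), Finset.sum_add_distrib]
    congr 1
    · by_cases h1 : 1 ≤ (i:ℕ)
      · rw [if_pos h1]
        have e : (∑ x : Fin m, if (x:ℕ) + 1 = (i:ℕ) then X else 0)
            = ∑ x : Fin m, if (x:ℕ) = (i:ℕ) - 1 then X else 0 :=
          Finset.sum_congr rfl fun j0 _ => if_congr (by omega) rfl rfl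
        rw [e, sum_ite_val, if_pos (by omega)]
      · rw [if_neg h1]; exact Finset.sum_eq_zero fun j0 _ => if_neg (by omega)
    · exact sum_ite_val m (i:ℕ) X
  -- the v-block sum
  have h4' : (∑ x : Fin rG, HG x cc * γ b x) = X := by
    have hh := congrFun (congrFun h4 b) cc
    simp only [mul_apply, transpose_apply] at hh
    calc ∑ x : Fin rG, HG x cc * γ b x = ∑ x : Fin rG, γ b x * HG x cc := by
          simp [mul_comm]
      _ = X := by rw [hX]; simp only [mul_apply, transpose_apply]; exact hh.symm
  have hC : (∑ ib : Fin (m+1) × Fin rG,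
        (if ((ib.1 : ℕ)) = (i : ℕ) then HG ib.2 cc else 0)
          * (if (ib.1 : ℕ) = m then γ b ib.2 else 0))
      = if (i:ℕ) = m then X else 0 := by
    rw [Fintype.sum_prod_type]
    have step : ∀ i' : Fin (m+1), (∑ b' : Fin rG,
        (if ((i' : ℕ)) = (i : ℕ) then HG b' cc else 0) * (if (i' : ℕ) = m then γ b b' else 0))
        = if (i':ℕ) = (i:ℕ) then (if (i:ℕ) = m then X else 0) else 0 := by
      intro i'
      by_cases hA : (i':ℕ) = (i:ℕ) <;> by_cases hB' : (i:ℕ) = m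
      · rw [if_pos hA, if_pos hB']
        simpa [hA, hB'] using h4'
      · rw [if_pos hA, if_neg hB']
        simp [hA, hB']
      · simp [hA]
      · simp [hA]
    rw [Finset.sum_congr rfl (fun i' _ => step i'), sum_ite_val, if_pos (by omega)]
  rw [hA, hB, hC]
  by_cases h0 : (i:ℕ) = 0
  · rw [if_pos h0, if_neg (by omega), if_pos (by omega), if_neg (by omega)]
    linear_combination hXX
  · by_cases hm' : (i:ℕ) = m
    · rw [if_neg h0, if_pos (by omega), if_neg (by omega), if_pos hm']
      linear_combination hXX
    · rw [if_neg h0, if_pos (by omega), if_pos (by omega), if_neg hm']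
      linear_combination hXX

/-- the logical generator matrices of the measurement-sticker deformed
code are valid. -/
theorem JMM_valid (m : ℕ) (hm : 1 ≤ m) {n nG rX rZ rG p : ℕ}
    (HX : Matrix (Fin rX) (Fin n) (ZMod 2))
    (HZ : Matrix (Fin rZ) (Fin n) (ZMod 2))
    (HG : Matrix (Fin rG) (Fin nG) (ZMod 2))
    (S : Matrix (Fin nG) (Fin n) (ZMod 2))
    (T : Matrix (Fin rX) (Fin rG) (ZMod 2))
    (JXC JZC : Matrix (Fin p) (Fin n) (ZMod 2))
    (γ : Matrix (Fin p) (Fin rG) (ZMod 2))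
    (h1 : HX * JZCᵀ = 0)
    (h2 : HZ * JXCᵀ = 0)
    (h3 : JXC * JZCᵀ = 1)
    (h4 : JXC * Sᵀ = γ * HG) :
    HMMX m HX HG T * (JMMZ m nG rG JZC)ᵀ = 0 ∧
      HMMZ m HZ HG S * (JMMX m JXC S γ)ᵀ = 0 ∧
      JMMX m JXC S γ * (JMMZ m nG rG JZC)ᵀ = 1 := by
  refine ⟨?_, ?_, ?_⟩
  · ext r b
    rcases r with a | ja
    · simpa [HMMX, JMMZ, mul_apply, Fintype.sum_sum_type]
        using congrFun (congrFun h1 a) b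
    · simp [HMMX, JMMZ, mul_apply, Fintype.sum_sum_type]
  · ext r b
    rcases r with a | ⟨i, cc⟩
    · simpa [HMMZ, JMMX, mul_apply, Fintype.sum_sum_type]
        using congrFun (congrFun h2 a) b
    · simpa [HMMZ, JMMX, mul_apply, Fintype.sum_sum_type]
        using key m hm HG S JXC γ h4 i cc b
  · ext a b
    simpa [JMMX, JMMZ, mul_apply, Fintype.sum_sum_type, one_apply]
      using congrFun (congrFun h3 a) b
end

section
/- Let J_X, J_Z ∈ 𝔽₂^{k×n} satisfy H_X J_Zᵀ = 0, H_Z J_Xᵀ = 0, and J_X J_Zᵀ = E_k. Then the logical generator matrices of the branch-sticker deformed code are valid: H^{MB}_X (J^{MB}_Z)ᵀ = 0, H^{MB}_Z (J^{MB}_X)ᵀ = 0, and J^{MB}_X (J^{MB}_Z)ᵀ = E_k. -/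
open Matrix

/-- The `X` logical generator matrix of the branch-sticker deformed code:
`J_X` in block `u_0`, `J_X Sᵀ` in each block `u_j`, zero in all `v` blocks. -/
def JMBX (m : ℕ) {n nG rG k : ℕ} (JX : Matrix (Fin k) (Fin n) (ZMod 2))
    (S : Matrix (Fin nG) (Fin n) (ZMod 2)) :
    Matrix (Fin k) (Fin n ⊕ (Fin m × Fin nG ⊕ Fin m × Fin rG)) (ZMod 2) :=
  Matrix.of fun a c =>
    match c with
    | Sum.inl j => JX a j
    | Sum.inr (Sum.inl (_, c')) => (JX * Sᵀ) a c'
    | Sum.inr (Sum.inr _) => 0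

/-- The `Z` logical generator matrix of the branch-sticker deformed code:
`J_Z` in block `u_0`, zero elsewhere. -/
def JMBZ (m nG rG : ℕ) {n k : ℕ} (JZ : Matrix (Fin k) (Fin n) (ZMod 2)) :
    Matrix (Fin k) (Fin n ⊕ (Fin m × Fin nG ⊕ Fin m × Fin rG)) (ZMod 2) :=
  Matrix.of fun a c =>
    match c with
    | Sum.inl j => JZ a j
    | Sum.inr _ => 0

/-! `J^{MB}_Z` is supported on the block `u_0`, where `J^{MB}_X` is `J_X` and the sticker
rows of `H^{MB}_X` vanish, so the first and third identities reduce to `H_X J_Zᵀ = 0` and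
`J_X J_Zᵀ = E_k`. In `H^{MB}_Z (J^{MB}_X)ᵀ` the memory rows give `H_Z J_Xᵀ = 0`. The sticker
check `i` (0-based) sees the `v` blocks, where `J^{MB}_X` vanishes, and exactly two of the
layers `u_0, …, u_m`, namely `u_i` and `u_{i+1}`; on each of them it reads the same row
`J_X Sᵀ` of `J^{MB}_X` (through `S` on `u_0`), so the two contributions cancel over 𝔽₂. -/

open Finset

section
variable {ι κ α β R : Type*} [Fintype α] [Fintype β] [Semiring R]

theorem Matrix.mul_transpose_fromCols_zero (A : Matrix ι (α ⊕ β) R) (B : Matrix κ α R) :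
    A * (fromCols B (0 : Matrix κ β R))ᵀ = A.toCols₁ * Bᵀ := by
  conv_lhs => rw [← fromCols_toCols A]
  rw [transpose_fromCols, fromCols_mul_fromRows, transpose_zero, Matrix.mul_zero, add_zero]

theorem Matrix.fromCols_zero_mul_transpose (A : Matrix ι α R) (B : Matrix κ (α ⊕ β) R) :
    fromCols A (0 : Matrix ι β R) * Bᵀ = A * B.toCols₁ᵀ := by
  conv_lhs => rw [← fromCols_toCols B]
  rw [transpose_fromCols, fromCols_mul_fromRows, Matrix.zero_mul, add_zero]

end

section
variable (m : ℕ) {n nG rX rZ rG k : ℕ}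

theorem JMBZ_eq_fromCols (JZ : Matrix (Fin k) (Fin n) (ZMod 2)) :
    JMBZ m nG rG JZ = fromCols JZ 0 := by
  ext a (j | c) <;> rfl

theorem toCols₁_HMBX (HX : Matrix (Fin rX) (Fin n) (ZMod 2))
    (HG : Matrix (Fin rG) (Fin nG) (ZMod 2)) (T : Matrix (Fin rX) (Fin rG) (ZMod 2)) :
    (HMBX m HX HG T).toCols₁ = fromRows HX 0 := by
  ext (a | a) j <;> rfl

theorem toRows₁_HMBZ (HZ : Matrix (Fin rZ) (Fin n) (ZMod 2))
    (HG : Matrix (Fin rG) (Fin nG) (ZMod 2)) (S : Matrix (Fin nG) (Fin n) (ZMod 2)) :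
    (HMBZ m HZ HG S).toRows₁ = fromCols HZ 0 := by
  ext a (j | c) <;> rfl

theorem toCols₁_JMBX (JX : Matrix (Fin k) (Fin n) (ZMod 2))
    (S : Matrix (Fin nG) (Fin n) (ZMod 2)) :
    (JMBX m JX S (rG := rG)).toCols₁ = JX := by
  ext a j; rfl

-- The `if` counts the layer `u_0`, which the first sticker check meets through `S`.
theorem card_sticker_layers_eq_two (i : Fin m) :
    (if (i : ℕ) = 0 then 1 else 0) + #{j : Fin m | (j : ℕ) + 1 = i ∨ (j : ℕ) = i} = 2 := by
  split_ifs with hi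
  · rw [card_eq_one.mpr ⟨i, by ext j; simp [Fin.ext_iff]; omega⟩]
  · have hlt : (i : ℕ) - 1 < m := by omega
    rw [card_eq_two.mpr ⟨⟨(i : ℕ) - 1, hlt⟩, i, by simp [Fin.ext_iff]; omega,
      by ext j; simp [Fin.ext_iff]; omega⟩]

theorem toRows₂_HMBZ_mul_JMBX_transpose_apply (HZ : Matrix (Fin rZ) (Fin n) (ZMod 2))
    (HG : Matrix (Fin rG) (Fin nG) (ZMod 2)) (S : Matrix (Fin nG) (Fin n) (ZMod 2))
    (JX : Matrix (Fin k) (Fin n) (ZMod 2)) (i : Fin m) (c : Fin nG) (a : Fin k) :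
    ((HMBZ m HZ HG S).toRows₂ * (JMBX m JX S (rG := rG))ᵀ) (i, c) a =
      ((if (i : ℕ) = 0 then 1 else 0) + #{j : Fin m | (j : ℕ) + 1 = i ∨ (j : ℕ) = i}) •
        (JX * Sᵀ) a c := by
  set y := (JX * Sᵀ) a c
  have h_u₀ : ∑ x, (if (i : ℕ) = 0 then S c x else 0) * JX a x =
      if (i : ℕ) = 0 then y else 0 := by
    split_ifs <;> simp [y, mul_apply, mul_comm]
  have h_layers : ∑ j : Fin m, ∑ c' : Fin nG,
      (if ((j : ℕ) + 1 = i ∨ (j : ℕ) = i) ∧ c' = c then 1 else 0) * (JX * Sᵀ) a c' =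
        #{j : Fin m | (j : ℕ) + 1 = i ∨ (j : ℕ) = i} • y := by
    simp [ite_and, sum_ite_eq', ← sum_filter, y]
  rw [mul_apply, Fintype.sum_sum_type, Fintype.sum_sum_type, Fintype.sum_prod_type]
  simp only [transpose_apply, toRows₂_apply, HMBZ, JMBX, of_apply, mul_zero, sum_const_zero,
    add_zero, h_u₀, h_layers, add_smul, ite_smul, one_smul, zero_smul]

theorem toRows₂_HMBZ_mul_JMBX_transpose (HZ : Matrix (Fin rZ) (Fin n) (ZMod 2))
    (HG : Matrix (Fin rG) (Fin nG) (ZMod 2)) (S : Matrix (Fin nG) (Fin n) (ZMod 2))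
    (JX : Matrix (Fin k) (Fin n) (ZMod 2)) :
    (HMBZ m HZ HG S).toRows₂ * (JMBX m JX S (rG := rG))ᵀ = 0 := by
  ext ⟨i, c⟩ a
  rw [toRows₂_HMBZ_mul_JMBX_transpose_apply, card_sticker_layers_eq_two, two_nsmul,
    CharTwo.add_self_eq_zero, Matrix.zero_apply]

end

theorem JMB_valid_general (m : ℕ) {n nG rX rZ rG k : ℕ}
    (HX : Matrix (Fin rX) (Fin n) (ZMod 2))
    (HZ : Matrix (Fin rZ) (Fin n) (ZMod 2))
    (HG : Matrix (Fin rG) (Fin nG) (ZMod 2))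
    (S : Matrix (Fin nG) (Fin n) (ZMod 2))
    (T : Matrix (Fin rX) (Fin rG) (ZMod 2))
    (JX JZ : Matrix (Fin k) (Fin n) (ZMod 2))
    (h1 : HX * JZᵀ = 0)
    (h2 : HZ * JXᵀ = 0)
    (h3 : JX * JZᵀ = 1) :
    HMBX m HX HG T * (JMBZ m nG rG JZ)ᵀ = 0 ∧
      HMBZ m HZ HG S * (JMBX m JX S (rG := rG))ᵀ = 0 ∧
      JMBX m JX S (rG := rG) * (JMBZ m nG rG JZ)ᵀ = 1 := by
  refine ⟨?_, ?_, ?_⟩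
  · rw [JMBZ_eq_fromCols, mul_transpose_fromCols_zero, toCols₁_HMBX, fromRows_mul, h1,
      Matrix.zero_mul, fromRows_zero]
  · rw [← fromRows_toRows (HMBZ m HZ HG S), fromRows_mul, toRows₁_HMBZ,
      fromCols_zero_mul_transpose, toCols₁_JMBX, h2, toRows₂_HMBZ_mul_JMBX_transpose,
      fromRows_zero]
  · rw [JMBZ_eq_fromCols, mul_transpose_fromCols_zero, toCols₁_JMBX, h3]

/-- the logical generator matrices of the branch-sticker deformed
code are valid. -/
theorem JMB_valid (m : ℕ) (hm : 1 ≤ m) {n nG rX rZ rG k : ℕ}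
    (HX : Matrix (Fin rX) (Fin n) (ZMod 2))
    (HZ : Matrix (Fin rZ) (Fin n) (ZMod 2))
    (HG : Matrix (Fin rG) (Fin nG) (ZMod 2))
    (S : Matrix (Fin nG) (Fin n) (ZMod 2))
    (T : Matrix (Fin rX) (Fin rG) (ZMod 2))
    (JX JZ : Matrix (Fin k) (Fin n) (ZMod 2))
    (h1 : HX * JZᵀ = 0)
    (h2 : HZ * JXᵀ = 0)
    (h3 : JX * JZᵀ = 1) :
    HMBX m HX HG T * (JMBZ m nG rG JZ)ᵀ = 0 ∧
      HMBZ m HZ HG S * (JMBX m JX S (rG := rG))ᵀ = 0 ∧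
      JMBX m JX S (rG := rG) * (JMBZ m nG rG JZ)ᵀ = 1 :=
  JMB_valid_general m HX HZ HG S T JX JZ h1 h2 h3
end

section
/- Assume H_X Sᵀ = T H_G and J_{X,C} Sᵀ = γ H_G. Let d ≥ 1 and suppose the memory has distance at least d in the following sense: every e ∈ 𝔽₂^n with H_X eᵀ = 0 and J_{X,C} eᵀ ≠ 0 satisfies |e| ≥ d, and every e ∈ 𝔽₂^n with H_Z eᵀ = 0 and J_{Z,C} eᵀ ≠ 0 satisfies |e| ≥ d. Let w ≥ 1 be a natural number such that |uS| ≤ w·|u| for all u ∈ 𝔽₂^{n_G}. Then: (a) every e with H^{MM}_X eᵀ = 0 and J^{MM}_X eᵀ ≠ 0 satisfies w·|e| ≥ d or |e| ≥ d_R (hence |e| ≥ min{d/w, d_R}); (b) every e with H^{MM}_Z eᵀ = 0 and J^{MM}_Z eᵀ ≠ 0 satisfies |e| ≥ d. In particular the measurement-sticker deformed code has distance at least min{d/w, d_R}. -/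
/-!
Split a deformed vector into its memory block `E`, its sticker blocks `f_1, …, f_m` and its
time blocks `g_1, …, g_{m+1}`. The sticker `X` checks say `g_{j+1} = g_j + H_G f_j`, so
`g_i = g_1 + H_G F_i` with `F_i = f_1 + ⋯ + f_{i-1}`; together with `J_{X,C} Sᵀ = γ H_G` the
logical syndrome of an `X`-logical collapses to `J_{X,C} E + γ g_1`. If every `g_i` is nonzero,
the logical meets all `m + 1` time blocks. Otherwise `g_i = 0` gives `H_G F_i = g_1`, and then
`H_X Sᵀ = T H_G` makes `E + F_i S` a logical of the memory, of weight at most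
`|E| + w |F_i| ≤ w |e|`. A `Z`-logical is already a logical of the memory on its block `E`.
-/

open Matrix

/-- Hamming weight of a vector. -/
def wt {ι : Type*} [Fintype ι] (v : ι → ZMod 2) : ℕ :=
  (Finset.univ.filter fun i => v i ≠ 0).card

section Weight

variable {ι κ : Type*} [Fintype ι] [Fintype κ]

theorem one_le_wt_iff {v : ι → ZMod 2} : 1 ≤ wt v ↔ v ≠ 0 :=
  hammingNorm_pos_iff

theorem wt_add_le (u v : ι → ZMod 2) : wt (u + v) ≤ wt u + wt v := by
  classical
  refine (Finset.card_le_card fun i => ?_).trans (Finset.card_union_le _ _)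
  simp only [Finset.mem_filter, Finset.mem_union, Finset.mem_univ, true_and, Pi.add_apply]
  contrapose!
  rintro ⟨hu, hv⟩
  simp [hu, hv]

theorem wt_sum_le {α : Type*} (s : Finset α) (f : α → ι → ZMod 2) :
    wt (∑ a ∈ s, f a) ≤ ∑ a ∈ s, wt (f a) :=
  Finset.le_sum_of_subadditive wt (by simp [wt]) wt_add_le s f

theorem wt_sumType (v : ι ⊕ κ → ZMod 2) : wt v = wt (v ∘ Sum.inl) + wt (v ∘ Sum.inr) := by
  simp [wt, Finset.card_filter, Fintype.sum_sum_type]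

theorem wt_prod (v : ι × κ → ZMod 2) : wt v = ∑ i, wt fun k => v (i, k) := by
  simp [wt, Finset.card_filter, Fintype.sum_prod_type]

end Weight

theorem Fin.eq_add_sum_of_succ_eq_add {M : Type*} [AddCommMonoid M] {m : ℕ}
    (g : Fin (m + 1) → M) (h : Fin m → M) (hg : ∀ j, g j.succ = g j.castSucc + h j)
    (i : Fin (m + 1)) : g i = g 0 + ∑ j with j.castSucc < i, h j := by
  induction i using Fin.induction with
  | zero => simp
  | succ k ih =>
    have hfilter : Finset.univ.filter (fun j : Fin m => j.castSucc < k.succ) =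
        insert k (Finset.univ.filter fun j => j.castSucc < k.castSucc) := by
      ext j
      simp [Fin.castSucc_lt_succ_iff, le_iff_lt_or_eq, or_comm]
    rw [hg, ih, hfilter, Finset.sum_insert (by simp), add_assoc, add_comm (h k)]

section Blocks

variable {R α β δ ι κ : Type*}

-- `blockU e j` and `blockV e i` are the paper's `u_{j+1}` and `v_{i+1}`.

def blockU0 (e : α ⊕ (ι × β ⊕ κ × δ) → R) : α → R := fun a => e (.inl a)

def blockU (e : α ⊕ (ι × β ⊕ κ × δ) → R) (j : ι) : β → R :=
  fun c => e (.inr (.inl (j, c)))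

def blockV (e : α ⊕ (ι × β ⊕ κ × δ) → R) (i : κ) : δ → R :=
  fun b => e (.inr (.inr (i, b)))

theorem wt_eq_blocks [Fintype α] [Fintype β] [Fintype δ] [Fintype ι] [Fintype κ]
    (e : α ⊕ (ι × β ⊕ κ × δ) → ZMod 2) :
    wt e = wt (blockU0 e) + (∑ j, wt (blockU e j) + ∑ i, wt (blockV e i)) := by
  rw [wt_sumType, wt_sumType (e ∘ Sum.inr), wt_prod, wt_prod]
  rfl

end Blocks

section Deformed

variable (m : ℕ) {n nG rX rZ rG p : ℕ}
    (e : Fin n ⊕ (Fin m × Fin nG ⊕ Fin (m + 1) × Fin rG) → ZMod 2)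

theorem HMMX_mulVec_inl (HX : Matrix (Fin rX) (Fin n) (ZMod 2))
    (HG : Matrix (Fin rG) (Fin nG) (ZMod 2)) (T : Matrix (Fin rX) (Fin rG) (ZMod 2))
    (a : Fin rX) :
    (HMMX m HX HG T *ᵥ e) (.inl a) = (HX *ᵥ blockU0 e) a + (T *ᵥ blockV e 0) a := by
  simp [HMMX, mulVec, dotProduct, Fintype.sum_sum_type, Fintype.sum_prod_type, blockU0, blockV,
    Fin.val_eq_zero_iff]

theorem HMMX_mulVec_inr (HX : Matrix (Fin rX) (Fin n) (ZMod 2))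
    (HG : Matrix (Fin rG) (Fin nG) (ZMod 2)) (T : Matrix (Fin rX) (Fin rG) (ZMod 2))
    (j : Fin m) (a : Fin rG) :
    (HMMX m HX HG T *ᵥ e) (.inr (j, a)) =
      (HG *ᵥ blockU e j) a + blockV e j.castSucc a + blockV e j.succ a := by
  have hpair (f : Fin (m + 1) → ZMod 2) :
      (∑ i : Fin (m + 1), if (i : ℕ) = j ∨ (i : ℕ) = j + 1 then f i else 0) =
        f j.castSucc + f j.succ := by
    rw [← Finset.sum_filter, ← Finset.sum_pair Fin.castSucc_lt_succ.ne]
    congr 1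
    ext i
    simp [Fin.ext_iff]
  simp [HMMX, mulVec, dotProduct, Fintype.sum_sum_type, Fintype.sum_prod_type, blockU, blockV,
    ite_and, hpair, add_assoc]

theorem JMMX_mulVec (JXC : Matrix (Fin p) (Fin n) (ZMod 2))
    (S : Matrix (Fin nG) (Fin n) (ZMod 2)) (γ : Matrix (Fin p) (Fin rG) (ZMod 2)) :
    JMMX m JXC S γ *ᵥ e =
      JXC *ᵥ blockU0 e + (JXC * Sᵀ) *ᵥ ∑ j, blockU e j + γ *ᵥ blockV e (Fin.last m) := by
  ext a
  have hlast : ∀ i : Fin (m + 1), (i : ℕ) = m ↔ i = Fin.last m := by simp [Fin.ext_iff]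
  simp only [mulVec, dotProduct, JMMX, hlast, of_apply, Fintype.sum_sum_type,
    Fintype.sum_prod_type, ite_mul, zero_mul, Finset.sum_ite_irrel, Finset.sum_const_zero,
    Finset.sum_ite_eq', Finset.mem_univ, ↓reduceIte, Pi.add_apply, blockU0, Finset.sum_apply,
    blockU, Finset.mul_sum, blockV, add_assoc, add_right_inj, add_left_inj]
  exact Finset.sum_comm

theorem HMMZ_mulVec_inl (HZ : Matrix (Fin rZ) (Fin n) (ZMod 2))
    (HG : Matrix (Fin rG) (Fin nG) (ZMod 2)) (S : Matrix (Fin nG) (Fin n) (ZMod 2))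
    (a : Fin rZ) :
    (HMMZ m HZ HG S *ᵥ e) (.inl a) = (HZ *ᵥ blockU0 e) a := by
  simp [HMMZ, mulVec, dotProduct, Fintype.sum_sum_type, blockU0]

theorem JMMZ_mulVec (JZC : Matrix (Fin p) (Fin n) (ZMod 2)) :
    JMMZ m nG rG JZC *ᵥ e = JZC *ᵥ blockU0 e := by
  ext a
  simp [JMMZ, mulVec, dotProduct, Fintype.sum_sum_type, blockU0]

end Deformed

section Consequences

variable {m n nG rX rG p : ℕ} {HX : Matrix (Fin rX) (Fin n) (ZMod 2)}
    {HG : Matrix (Fin rG) (Fin nG) (ZMod 2)} {T : Matrix (Fin rX) (Fin rG) (ZMod 2)}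
    {e : Fin n ⊕ (Fin m × Fin nG ⊕ Fin (m + 1) × Fin rG) → ZMod 2}

theorem HX_mulVec_blockU0 (hX : HMMX m HX HG T *ᵥ e = 0) :
    HX *ᵥ blockU0 e = T *ᵥ blockV e 0 := by
  ext a
  have h := congrFun hX (.inl a)
  rwa [HMMX_mulVec_inl, Pi.zero_apply, add_eq_zero_iff_eq_neg, ZModModule.neg_eq_self] at h

theorem blockV_succ (hX : HMMX m HX HG T *ᵥ e = 0) (j : Fin m) :
    blockV e j.succ = blockV e j.castSucc + HG *ᵥ blockU e j := by
  ext a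
  have h := congrFun hX (.inr (j, a))
  rw [HMMX_mulVec_inr, Pi.zero_apply, add_eq_zero_iff_eq_neg, ZModModule.neg_eq_self] at h
  rw [Pi.add_apply, ← h, add_comm]

theorem blockV_eq_add_mulVec_sum (hX : HMMX m HX HG T *ᵥ e = 0) (i : Fin (m + 1)) :
    blockV e i = blockV e 0 + HG *ᵥ ∑ j with j.castSucc < i, blockU e j := by
  rw [mulVec_sum]
  exact Fin.eq_add_sum_of_succ_eq_add _ _ (blockV_succ hX) i

theorem JMMX_mulVec_of_HMMX_mulVec_eq_zero {JXC : Matrix (Fin p) (Fin n) (ZMod 2)}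
    {S : Matrix (Fin nG) (Fin n) (ZMod 2)} {γ : Matrix (Fin p) (Fin rG) (ZMod 2)}
    (hγ : JXC * Sᵀ = γ * HG) (hX : HMMX m HX HG T *ᵥ e = 0) :
    JMMX m JXC S γ *ᵥ e = JXC *ᵥ blockU0 e + γ *ᵥ blockV e 0 := by
  have hall : ({j | j.castSucc < Fin.last m} : Finset (Fin m)) = Finset.univ :=
    Finset.filter_true_of_mem fun j _ => Fin.castSucc_lt_last j
  rw [JMMX_mulVec, blockV_eq_add_mulVec_sum hX (Fin.last m), hall, hγ, ← mulVec_mulVec,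
    mulVec_add, add_comm (γ *ᵥ blockV e 0), ZModModule.add_add_add_cancel]

end Consequences

theorem le_wt_add_mul_wt_of_mulVec_eq {ι κ ρ μ π : Type*} [Fintype ι] [Fintype κ]
    [Fintype μ] {d w : ℕ} {HX : Matrix ρ ι (ZMod 2)} {HG : Matrix μ κ (ZMod 2)}
    {S : Matrix κ ι (ZMod 2)} {T : Matrix ρ μ (ZMod 2)} {JXC : Matrix π ι (ZMod 2)}
    {γ : Matrix π μ (ZMod 2)}
    (hcompat : HX * Sᵀ = T * HG) (hγ : JXC * Sᵀ = γ * HG)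
    (hdX : ∀ e, HX *ᵥ e = 0 → JXC *ᵥ e ≠ 0 → d ≤ wt e)
    (hwS : ∀ u, wt (u ᵥ* S) ≤ w * wt u) {E : ι → ZMod 2} {F : κ → ZMod 2}
    (hE : HX *ᵥ E = T *ᵥ HG *ᵥ F) (hJ : JXC *ᵥ E + γ *ᵥ HG *ᵥ F ≠ 0) :
    d ≤ wt E + w * wt F := by
  have hcheck : HX *ᵥ (E + Sᵀ *ᵥ F) = 0 := by
    rw [mulVec_add, mulVec_mulVec, hcompat, ← mulVec_mulVec, hE, ZModModule.add_self]
  have hlogical : JXC *ᵥ (E + Sᵀ *ᵥ F) ≠ 0 := by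
    rwa [mulVec_add, mulVec_mulVec, hγ, ← mulVec_mulVec]
  calc d ≤ wt (E + Sᵀ *ᵥ F) := hdX _ hcheck hlogical
    _ ≤ wt E + wt (F ᵥ* S) := mulVec_transpose S F ▸ wt_add_le _ _
    _ ≤ wt E + w * wt F := Nat.add_le_add_left (hwS F) _

theorem le_mul_wt_or_le_wt_of_HMMX_mulVec_eq_zero {m n nG rX rG p d w : ℕ}
    {HX : Matrix (Fin rX) (Fin n) (ZMod 2)} {HG : Matrix (Fin rG) (Fin nG) (ZMod 2)}
    {S : Matrix (Fin nG) (Fin n) (ZMod 2)} {T : Matrix (Fin rX) (Fin rG) (ZMod 2)}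
    {JXC : Matrix (Fin p) (Fin n) (ZMod 2)} {γ : Matrix (Fin p) (Fin rG) (ZMod 2)}
    (hcompat : HX * Sᵀ = T * HG) (hγ : JXC * Sᵀ = γ * HG)
    (hdX : ∀ e, HX *ᵥ e = 0 → JXC *ᵥ e ≠ 0 → d ≤ wt e) (hw : 1 ≤ w)
    (hwS : ∀ u, wt (u ᵥ* S) ≤ w * wt u)
    {e : Fin n ⊕ (Fin m × Fin nG ⊕ Fin (m + 1) × Fin rG) → ZMod 2}
    (hX : HMMX m HX HG T *ᵥ e = 0) (hJ : JMMX m JXC S γ *ᵥ e ≠ 0) :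
    d ≤ w * wt e ∨ m + 1 ≤ wt e := by
  rw [JMMX_mulVec_of_HMMX_mulVec_eq_zero hγ hX] at hJ
  by_cases hv : ∃ i, blockV e i = 0
  · obtain ⟨i, hi⟩ := hv
    have hF : HG *ᵥ ∑ j with j.castSucc < i, blockU e j = blockV e 0 := by
      have h := blockV_eq_add_mulVec_sum hX i
      rwa [hi, eq_comm, add_eq_zero_iff_eq_neg, ZModModule.neg_eq_self, eq_comm] at h
    left
    calc d ≤ wt (blockU0 e) + w * wt (∑ j with j.castSucc < i, blockU e j) :=
          le_wt_add_mul_wt_of_mulVec_eq hcompat hγ hdX hwS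
            (hF ▸ HX_mulVec_blockU0 hX) (hF ▸ hJ)
      _ ≤ w * wt (blockU0 e) + w * ∑ j, wt (blockU e j) := by
          gcongr
          · exact Nat.le_mul_of_pos_left _ hw
          · exact (wt_sum_le _ _).trans
              (Finset.sum_le_sum_of_subset (Finset.filter_subset _ _))
      _ ≤ w * wt e := by
          rw [← mul_add, wt_eq_blocks]
          gcongr
          omega
  · push Not at hv
    right
    calc m + 1 = ∑ _i : Fin (m + 1), 1 := by simp
      _ ≤ ∑ i, wt (blockV e i) := Finset.sum_le_sum fun i _ => one_le_wt_iff.2 (hv i)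
      _ ≤ wt e := by
          rw [wt_eq_blocks]
          omega

theorem le_wt_of_JMMZ_mulVec_ne_zero {m n nG rZ rG p d : ℕ}
    {HZ : Matrix (Fin rZ) (Fin n) (ZMod 2)} {HG : Matrix (Fin rG) (Fin nG) (ZMod 2)}
    {S : Matrix (Fin nG) (Fin n) (ZMod 2)} {JZC : Matrix (Fin p) (Fin n) (ZMod 2)}
    (hdZ : ∀ e, HZ *ᵥ e = 0 → JZC *ᵥ e ≠ 0 → d ≤ wt e)
    {e : Fin n ⊕ (Fin m × Fin nG ⊕ Fin (m + 1) × Fin rG) → ZMod 2}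
    (hZ : HMMZ m HZ HG S *ᵥ e = 0) (hJ : JMMZ m nG rG JZC *ᵥ e ≠ 0) :
    d ≤ wt e := by
  have hcheck : HZ *ᵥ blockU0 e = 0 := by
    ext a
    exact (HMMZ_mulVec_inl m e HZ HG S a).symm.trans (congrFun hZ (.inl a))
  calc d ≤ wt (blockU0 e) := hdZ _ hcheck (JMMZ_mulVec m e JZC ▸ hJ)
    _ ≤ wt e := wt_sumType e ▸ Nat.le_add_right _ _

theorem measurement_sticker_distance_general (m : ℕ) {n nG rX rZ rG p : ℕ}
    (HX : Matrix (Fin rX) (Fin n) (ZMod 2))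
    (HZ : Matrix (Fin rZ) (Fin n) (ZMod 2))
    (HG : Matrix (Fin rG) (Fin nG) (ZMod 2))
    (S : Matrix (Fin nG) (Fin n) (ZMod 2))
    (T : Matrix (Fin rX) (Fin rG) (ZMod 2))
    (JXC JZC : Matrix (Fin p) (Fin n) (ZMod 2))
    (γ : Matrix (Fin p) (Fin rG) (ZMod 2))
    (hcompat : HX * Sᵀ = T * HG)
    (hγ : JXC * Sᵀ = γ * HG)
    (d : ℕ)
    (hdX : ∀ e : Fin n → ZMod 2, HX.mulVec e = 0 → JXC.mulVec e ≠ 0 → d ≤ wt e)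
    (hdZ : ∀ e : Fin n → ZMod 2, HZ.mulVec e = 0 → JZC.mulVec e ≠ 0 → d ≤ wt e)
    (w : ℕ) (hw : 1 ≤ w)
    (hwS : ∀ u : Fin nG → ZMod 2, wt (vecMul u S) ≤ w * wt u) :
    (∀ e : Fin n ⊕ (Fin m × Fin nG ⊕ Fin (m + 1) × Fin rG) → ZMod 2,
      (HMMX m HX HG T).mulVec e = 0 → (JMMX m JXC S γ).mulVec e ≠ 0 →
        d ≤ w * wt e ∨ m + 1 ≤ wt e) ∧
    (∀ e : Fin n ⊕ (Fin m × Fin nG ⊕ Fin (m + 1) × Fin rG) → ZMod 2,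
      (HMMZ m HZ HG S).mulVec e = 0 → (JMMZ m nG rG JZC).mulVec e ≠ 0 →
        d ≤ wt e) :=
  ⟨fun _ hX hJ => le_mul_wt_or_le_wt_of_HMMX_mulVec_eq_zero hcompat hγ hdX hw hwS hX hJ,
    fun _ hZ hJ => le_wt_of_JMMZ_mulVec_ne_zero hdZ hZ hJ⟩

/-- distance bound for the measurement-sticker deformed code
(`d_R = m + 1`). If the memory has distance at least `d` and `|uS| ≤ w |u|`, then
(a) every `X`-type logical error `e` of the deformed code satisfies
`w·|e| ≥ d` or `|e| ≥ d_R`, and (b) every `Z`-type logical error `e` satisfies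
`|e| ≥ d`; hence the deformed code has distance at least `min {d/w, d_R}`. -/
theorem measurement_sticker_distance (m : ℕ) (hm : 1 ≤ m) {n nG rX rZ rG p : ℕ}
    (HX : Matrix (Fin rX) (Fin n) (ZMod 2))
    (HZ : Matrix (Fin rZ) (Fin n) (ZMod 2))
    (HG : Matrix (Fin rG) (Fin nG) (ZMod 2))
    (S : Matrix (Fin nG) (Fin n) (ZMod 2))
    (T : Matrix (Fin rX) (Fin rG) (ZMod 2))
    (JXC JZC : Matrix (Fin p) (Fin n) (ZMod 2))
    (γ : Matrix (Fin p) (Fin rG) (ZMod 2))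
    (hcompat : HX * Sᵀ = T * HG)
    (hγ : JXC * Sᵀ = γ * HG)
    (d : ℕ) (hd : 1 ≤ d)
    (hdX : ∀ e : Fin n → ZMod 2, HX.mulVec e = 0 → JXC.mulVec e ≠ 0 → d ≤ wt e)
    (hdZ : ∀ e : Fin n → ZMod 2, HZ.mulVec e = 0 → JZC.mulVec e ≠ 0 → d ≤ wt e)
    (w : ℕ) (hw : 1 ≤ w)
    (hwS : ∀ u : Fin nG → ZMod 2, wt (vecMul u S) ≤ w * wt u) :
    (∀ e : Fin n ⊕ (Fin m × Fin nG ⊕ Fin (m + 1) × Fin rG) → ZMod 2,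
      (HMMX m HX HG T).mulVec e = 0 → (JMMX m JXC S γ).mulVec e ≠ 0 →
        d ≤ w * wt e ∨ m + 1 ≤ wt e) ∧
    (∀ e : Fin n ⊕ (Fin m × Fin nG ⊕ Fin (m + 1) × Fin rG) → ZMod 2,
      (HMMZ m HZ HG S).mulVec e = 0 → (JMMZ m nG rG JZC).mulVec e ≠ 0 →
        d ≤ wt e) :=
  measurement_sticker_distance_general m HX HZ HG S T JXC JZC γ hcompat hγ d hdX hdZ w hw hwS
end

section
/- Let P ∈ 𝔽₂^{n×N} be the single block row with E_n in block u_0 and zero elsewhere, where N is the total number of columns of the measurement-sticker deformed code. Assume H_X Sᵀ = T H_G and J_{X,C} Sᵀ = γ H_G, and suppose there exists J_G ∈ 𝔽₂^{q×n_G} with rs J_G ⊆ ker H_G and J_G S = J_{Z,A} (the glue code is devised for J_{Z,A}). Then: (i) rs H_X = rs(H^{MM}_X Pᵀ); (ii) rs(H_Z P) ⊆ rs H^{MM}_Z; (iii) rs J_{X,C} = rs(J^{MM}_X Pᵀ); (iv) rs(J_{Z,C} P) = rs J^{MM}_Z; (v) rs(J_{Z,A} P) ⊆ rs H^{MM}_Z.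 In particular, by (v), every measured logical operator becomes a Z stabiliser of the measurement-sticker deformed code. -/
open Matrix

/-- The row space (𝔽₂-span of the rows) of a matrix. -/
def rowSpan {ι κ : Type*} (A : Matrix ι κ (ZMod 2)) :
    Submodule (ZMod 2) (κ → ZMod 2) :=
  Submodule.span (ZMod 2) (Set.range A)

/-- The block-row matrix `P` with `E_n` in block `u_0` and zero elsewhere
(measurement-sticker deformed code). -/
def PMM (m nG rG : ℕ) {n : ℕ} :
    Matrix (Fin n) (Fin n ⊕ (Fin m × Fin nG ⊕ Fin (m + 1) × Fin rG)) (ZMod 2) :=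
  Matrix.of fun a c =>
    match c with
    | Sum.inl j => if j = a then 1 else 0
    | Sum.inr _ => 0

/-!
Multiplying by `Pᵀ` on the right keeps only the `u_0` columns, and `B P` places `B` in the
`u_0` block, so (i)–(iv) are read off the block structure. For (v), take a row `x` of `J_G`
and add up the sticker `Z` checks of all `d_R` layers with coefficients `x`: every block
`u_j`, `j ≥ 1`, occurs in two consecutive layers and cancels over `𝔽₂`, each block `v_i`
receives `H_G xᵀ = 0`, and the block `u_0` receives `x S`, the corresponding row of `J_{Z,A}`.
-/

section RowSpan

variable {ι ι' κ : Type*}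

theorem rowSpan_le_iff {A : Matrix ι κ (ZMod 2)} {V : Submodule (ZMod 2) (κ → ZMod 2)} :
    rowSpan A ≤ V ↔ ∀ i, A i ∈ V :=
  Submodule.span_le.trans Set.range_subset_iff

theorem row_mem_rowSpan (A : Matrix ι κ (ZMod 2)) (i : ι) : A i ∈ rowSpan A :=
  Submodule.subset_span ⟨i, rfl⟩

theorem rowSpan_fromRows_zero (A : Matrix ι κ (ZMod 2)) :
    rowSpan (fromRows A (0 : Matrix ι' κ (ZMod 2))) = rowSpan A := by
  refine le_antisymm (rowSpan_le_iff.2 ?_)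
    (rowSpan_le_iff.2 fun i => row_mem_rowSpan _ (Sum.inl i))
  rintro (i | i)
  · exact row_mem_rowSpan A i
  · exact Submodule.zero_mem _

end RowSpan

section Projection

variable {m n nG rG : ℕ} {ι : Type*}

theorem PMM_eq_fromCols : PMM m nG rG = fromCols (1 : Matrix (Fin n) (Fin n) (ZMod 2)) 0 := by
  ext a (j | c)
  · simp [PMM, one_apply, eq_comm]
  · rfl

theorem mul_PMM (B : Matrix ι (Fin n) (ZMod 2)) :
    B * PMM m nG rG = fromCols B 0 := by
  -- `n` is found only by unification, so `*` elaborates through the defeq `CStarMatrix`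
  -- instance; restate the product with `Matrix` multiplication before rewriting.
  show B * PMM m nG rG (n := n) = _
  rw [PMM_eq_fromCols, mul_fromCols, Matrix.mul_one, Matrix.mul_zero]

theorem mul_transpose_PMM (A : Matrix ι (Fin n ⊕ (Fin m × Fin nG ⊕ Fin (m + 1) × Fin rG)) (ZMod 2)) :
    A * (PMM m nG rG)ᵀ = A.toCols₁ := by
  show A * (PMM m nG rG (n := n))ᵀ = _
  rw [PMM_eq_fromCols, transpose_fromCols, ← fromCols_toCols A, fromCols_mul_fromRows]
  simp

end Projection

theorem HMMX_mul_transpose_PMM (m : ℕ) {n nG rX rG : ℕ} (HX : Matrix (Fin rX) (Fin n) (ZMod 2))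
    (HG : Matrix (Fin rG) (Fin nG) (ZMod 2)) (T : Matrix (Fin rX) (Fin rG) (ZMod 2)) :
    HMMX m HX HG T * (PMM m nG rG)ᵀ = fromRows HX 0 := by
  rw [mul_transpose_PMM]
  ext (a | b) j <;> rfl

theorem sum_ite_adjacent_eq_zero {m : ℕ} (j : Fin m) (y : ZMod 2) :
    ∑ i : Fin (m + 1), (if (j : ℕ) + 1 = i ∨ (j : ℕ) = i then y else 0) = 0 := by
  have hpair : ∀ i : Fin (m + 1),
      ((j : ℕ) + 1 = i ∨ (j : ℕ) = i) ↔ i ∈ ({j.succ, j.castSucc} : Finset _) := by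
    intro i
    simp [Fin.ext_iff, eq_comm]
  simp_rw [hpair, Finset.sum_ite_mem, Finset.univ_inter, Finset.sum_const,
    Finset.card_pair (Fin.castSucc_lt_succ (i := j)).ne', two_nsmul, CharTwo.add_self_eq_zero]

section StickerZChecks

variable (m : ℕ) {n nG rZ rG : ℕ} (HZ : Matrix (Fin rZ) (Fin n) (ZMod 2))
  (HG : Matrix (Fin rG) (Fin nG) (ZMod 2)) (S : Matrix (Fin nG) (Fin n) (ZMod 2))

theorem sum_sticker_rows_HMMZ (x : Fin nG → ZMod 2) :
    ∑ ic : Fin (m + 1) × Fin nG, x ic.2 • HMMZ m HZ HG S (Sum.inr ic) =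
      Sum.elim (x ᵥ* S) (Sum.elim 0 fun ib => (HG *ᵥ x) ib.2) := by
  funext c
  rcases c with j | ⟨j, c⟩ | ⟨i, b⟩
  · simp [Finset.sum_apply, HMMZ, Fintype.sum_prod_type, vecMul, dotProduct]
  · simp [Finset.sum_apply, HMMZ, Fintype.sum_prod_type, ite_and, sum_ite_adjacent_eq_zero]
  · simp [Finset.sum_apply, HMMZ, Fintype.sum_prod_type, mulVec, dotProduct, Fin.val_inj,
      mul_comm]

theorem vecMul_mem_rowSpan_HMMZ {x : Fin nG → ZMod 2} (hx : HG *ᵥ x = 0) :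
    Sum.elim (x ᵥ* S) 0 ∈ rowSpan (HMMZ m HZ HG S) := by
  have hsum : Sum.elim (x ᵥ* S) 0 =
      ∑ ic : Fin (m + 1) × Fin nG, x ic.2 • HMMZ m HZ HG S (Sum.inr ic) := by
    rw [sum_sticker_rows_HMMZ, hx]
    simp [← Pi.zero_def]
  rw [hsum]
  exact Submodule.sum_mem _ fun ic _ => Submodule.smul_mem _ _ (row_mem_rowSpan _ _)

theorem HMMZ_inl (a : Fin rZ) : HMMZ m HZ HG S (Sum.inl a) = fromCols HZ 0 a := by
  funext c
  rcases c with j | c <;> rfl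

end StickerZChecks

theorem fromCols_zero_eq_JMMZ (m nG rG : ℕ) {n p : ℕ} (JZC : Matrix (Fin p) (Fin n) (ZMod 2)) :
    fromCols JZC 0 = JMMZ m nG rG JZC := by
  ext a (j | c) <;> rfl

theorem measurement_sticker_operator_relations_general (m : ℕ)
    {n nG rX rZ rG p q : ℕ}
    (HX : Matrix (Fin rX) (Fin n) (ZMod 2))
    (HZ : Matrix (Fin rZ) (Fin n) (ZMod 2))
    (HG : Matrix (Fin rG) (Fin nG) (ZMod 2))
    (S : Matrix (Fin nG) (Fin n) (ZMod 2))
    (T : Matrix (Fin rX) (Fin rG) (ZMod 2))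
    (JXC JZC : Matrix (Fin p) (Fin n) (ZMod 2))
    (γ : Matrix (Fin p) (Fin rG) (ZMod 2))
    (JZA : Matrix (Fin q) (Fin n) (ZMod 2))
    (JG : Matrix (Fin q) (Fin nG) (ZMod 2))
    (hJGker : ∀ i : Fin q, HG.mulVec (JG i) = 0)
    (hJGS : JG * S = JZA) :
    rowSpan HX = rowSpan (HMMX m HX HG T * (PMM m nG rG)ᵀ) ∧
      rowSpan (HZ * PMM m nG rG) ≤ rowSpan (HMMZ m HZ HG S) ∧
      rowSpan JXC = rowSpan (JMMX m JXC S γ * (PMM m nG rG)ᵀ) ∧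
      rowSpan (JZC * PMM m nG rG) = rowSpan (JMMZ m nG rG JZC) ∧
      rowSpan (JZA * PMM m nG rG) ≤ rowSpan (HMMZ m HZ HG S) := by
  refine ⟨?_, ?_, ?_, ?_, ?_⟩
  · rw [HMMX_mul_transpose_PMM, rowSpan_fromRows_zero]
  · rw [mul_PMM, rowSpan_le_iff]
    exact fun a => HMMZ_inl m HZ HG S a ▸ row_mem_rowSpan _ _
  · rw [mul_transpose_PMM]
    rfl
  · rw [mul_PMM, fromCols_zero_eq_JMMZ]
  · rw [mul_PMM, rowSpan_le_iff, ← hJGS]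
    exact fun a => vecMul_mem_rowSpan_HMMZ m HZ HG S (hJGker a)

/-- relations between memory operators and measurement-sticker
deformed-code operators. In particular, by (v), every measured logical operator
becomes a `Z` stabiliser of the deformed code. -/
theorem measurement_sticker_operator_relations (m : ℕ) (hm : 1 ≤ m)
    {n nG rX rZ rG p q : ℕ}
    (HX : Matrix (Fin rX) (Fin n) (ZMod 2))
    (HZ : Matrix (Fin rZ) (Fin n) (ZMod 2))
    (HG : Matrix (Fin rG) (Fin nG) (ZMod 2))
    (S : Matrix (Fin nG) (Fin n) (ZMod 2))
    (T : Matrix (Fin rX) (Fin rG) (ZMod 2))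
    (JXC JZC : Matrix (Fin p) (Fin n) (ZMod 2))
    (γ : Matrix (Fin p) (Fin rG) (ZMod 2))
    (JZA : Matrix (Fin q) (Fin n) (ZMod 2))
    (JG : Matrix (Fin q) (Fin nG) (ZMod 2))
    (hcompat : HX * Sᵀ = T * HG)
    (hγ : JXC * Sᵀ = γ * HG)
    (hJGker : ∀ i : Fin q, HG.mulVec (JG i) = 0)
    (hJGS : JG * S = JZA) :
    rowSpan HX = rowSpan (HMMX m HX HG T * (PMM m nG rG)ᵀ) ∧
      rowSpan (HZ * PMM m nG rG) ≤ rowSpan (HMMZ m HZ HG S) ∧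
      rowSpan JXC = rowSpan (JMMX m JXC S γ * (PMM m nG rG)ᵀ) ∧
      rowSpan (JZC * PMM m nG rG) = rowSpan (JMMZ m nG rG JZC) ∧
      rowSpan (JZA * PMM m nG rG) ≤ rowSpan (HMMZ m HZ HG S) :=
  measurement_sticker_operator_relations_general m HX HZ HG S T JXC JZC γ JZA JG hJGker hJGS
end

section
/- (Existence of a coarsely devised LDPC glue code.) Let H_X ∈ 𝔽₂^{r_X×n} and J_{Z,A} ∈ 𝔽₂^{q×n} such that every row of J_{Z,A} lies in ker H_X. Let B_N ⊆ {1,…,n} be the set of columns on which J_{Z,A} has a nonzero entry and n_N = |B_N|. Then there exist a natural number r_G with r_G ≤ w_max(H_X)·n_N and matrices H_G ∈ 𝔽₂^{r_G×n_N}, S ∈ 𝔽₂^{n_N×n}, T ∈ 𝔽₂^{r_X×r_G} such that: H_X Sᵀ = T H_G; every row and every column of S, and of T, has at most one nonzero entry; rs J_{Z,A} ⊆ (ker H_G)·S; and w_max(H_G) ≤ w_max(H_X). -/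
/-!
Take `H_G` to be the submatrix of `H_X` on the columns `B_N` and on the rows meeting them; `S`
selects the columns `B_N` and `T` puts the selected rows back in place, so both are partial
permutation matrices and `H_X Sᵀ = T H_G` because the discarded rows vanish on `B_N`. A row of
`J_{Z,A}` is supported on `B_N`, so its restriction to `B_N` lies in `ker H_G` and is mapped back
to it by `S`. Submatrices have smaller row and column weights, and each of the `n_N` columns meets
at most `w_max(H_X)` rows.
-/

open Matrix

/-- `w_max A`: the maximum number of nonzero entries in any row or column of `A`. -/
def wmax {r c : ℕ} (A : Matrix (Fin r) (Fin c) (ZMod 2)) : ℕ :=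
  max (Finset.univ.sup fun i => (Finset.univ.filter fun j => A i j ≠ 0).card)
    (Finset.univ.sup fun j => (Finset.univ.filter fun i => A i j ≠ 0).card)

section Wmax

variable {r c : ℕ}

lemma row_card_le_wmax (A : Matrix (Fin r) (Fin c) (ZMod 2)) (i : Fin r) :
    (Finset.univ.filter fun j => A i j ≠ 0).card ≤ wmax A :=
  (Finset.le_sup (f := fun i => (Finset.univ.filter fun j => A i j ≠ 0).card)
    (Finset.mem_univ i)).trans le_sup_left

lemma col_card_le_wmax (A : Matrix (Fin r) (Fin c) (ZMod 2)) (j : Fin c) :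
    (Finset.univ.filter fun i => A i j ≠ 0).card ≤ wmax A :=
  (Finset.le_sup (f := fun j => (Finset.univ.filter fun i => A i j ≠ 0).card)
    (Finset.mem_univ j)).trans le_sup_right

lemma wmax_submatrix_le {r' c' : ℕ} (A : Matrix (Fin r) (Fin c) (ZMod 2))
    {e : Fin r' → Fin r} {f : Fin c' → Fin c} (he : Function.Injective e)
    (hf : Function.Injective f) : wmax (A.submatrix e f) ≤ wmax A := by
  refine max_le (Finset.sup_le fun a _ => ?_) (Finset.sup_le fun b _ => ?_)
  · refine le_trans ?_ (row_card_le_wmax A (e a))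
    exact Finset.card_le_card_of_injOn f
      (fun b hb => by simpa using (Finset.mem_filter.mp hb).2) hf.injOn
  · refine le_trans ?_ (col_card_le_wmax A (f b))
    exact Finset.card_le_card_of_injOn e
      (fun a ha => by simpa using (Finset.mem_filter.mp ha).2) he.injOn

lemma card_biUnion_col_support_le (A : Matrix (Fin r) (Fin c) (ZMod 2)) (B : Finset (Fin c)) :
    (B.biUnion fun j => Finset.univ.filter fun i => A i j ≠ 0).card ≤ wmax A * B.card :=
  calc _ ≤ ∑ j ∈ B, (Finset.univ.filter fun i => A i j ≠ 0).card := Finset.card_biUnion_le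
    _ ≤ ∑ _j ∈ B, wmax A := Finset.sum_le_sum fun j _ => col_card_le_wmax A j
    _ = wmax A * B.card := by rw [Finset.sum_const, smul_eq_mul, mul_comm]

end Wmax

namespace Matrix

variable {ι κ ν μ α : Type*}

section PartialPermutation

variable [DecidableEq ι] [Zero α] [One α] [DecidableEq α]

lemma card_filter_one_submatrix_row_le_one [Fintype κ] (e : ν → ι) {f : κ → ι}
    (hf : Function.Injective f) (a : ν) :
    (Finset.univ.filter fun b => (1 : Matrix ι ι α).submatrix e f a b ≠ 0).card ≤ 1 := by
  refine Finset.card_le_one.mpr fun b hb b' hb' => hf ?_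
  simp only [Finset.mem_filter, submatrix_apply, one_apply, ne_eq, ite_eq_right_iff,
    not_forall] at hb hb'
  exact hb.2.1.symm.trans hb'.2.1

lemma card_filter_one_submatrix_col_le_one [Fintype ν] {e : ν → ι} (he : Function.Injective e)
    (f : κ → ι) (b : κ) :
    (Finset.univ.filter fun a => (1 : Matrix ι ι α).submatrix e f a b ≠ 0).card ≤ 1 := by
  refine Finset.card_le_one.mpr fun a ha a' ha' => he ?_
  simp only [Finset.mem_filter, submatrix_apply, one_apply, ne_eq, ite_eq_right_iff,
    not_forall] at ha ha'
  exact ha.2.1.trans ha'.2.1.symm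

end PartialPermutation

variable [Semiring α] [Fintype ι]

lemma submatrix_mulVec_comp_of_range [Fintype κ] (A : Matrix ν ι α) (e : μ → ν)
    {f : κ → ι} (hf : Function.Injective f) (v : ι → α) (hv : ∀ j ∉ Set.range f, v j = 0) :
    A.submatrix e f *ᵥ (v ∘ f) = (A *ᵥ v) ∘ e := by
  funext k
  exact Fintype.sum_of_injective f hf _ _ (fun j' hj' => by simp [hv j' hj']) (fun _ => rfl)

variable [DecidableEq ι]

lemma mul_transpose_one_submatrix (M : Matrix ν ι α) (f : κ → ι) :
    M * ((1 : Matrix ι ι α).submatrix f id)ᵀ = M.submatrix id f := by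
  rw [transpose_submatrix, transpose_one]
  exact mul_submatrix_one (Equiv.refl ι) f M

variable [Fintype κ]

lemma one_submatrix_mul_submatrix_of_range {g : κ → ι} (hg : Function.Injective g)
    (A : Matrix ι μ α) (hA : ∀ i ∉ Set.range g, ∀ j, A i j = 0) :
    (1 : Matrix ι ι α).submatrix id g * A.submatrix g id = A := by
  ext i j
  simp only [mul_apply, submatrix_apply, id, one_apply, ite_mul, one_mul, zero_mul]
  rw [Fintype.sum_of_injective g hg _ (fun i' => if i = i' then A i' j else 0)
    (fun i' hi' => by simp [hA i' hi']) (fun _ => rfl), Finset.sum_ite_eq]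
  simp

lemma vecMul_one_submatrix_of_range {f : κ → ι} (hf : Function.Injective f) (v : ι → α)
    (hv : ∀ j ∉ Set.range f, v j = 0) :
    (v ∘ f) ᵥ* (1 : Matrix ι ι α).submatrix f id = v := by
  conv_rhs => rw [← vecMul_one v]
  funext j
  exact Fintype.sum_of_injective f hf _ _ (fun j' hj' => by simp [hv j' hj']) (fun _ => rfl)

end Matrix

/-- existence of a coarsely devised LDPC glue code. Here `B_N` is the
set of columns on which `J_{Z,A}` is supported and `n_N = |B_N|`. -/
theorem exists_coarsely_devised_glue_code {rX n q : ℕ}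
    (HX : Matrix (Fin rX) (Fin n) (ZMod 2))
    (JZA : Matrix (Fin q) (Fin n) (ZMod 2))
    (hker : ∀ i : Fin q, HX.mulVec (JZA i) = 0)
    (nN : ℕ)
    (hnN : nN = (Finset.univ.filter fun j : Fin n => ∃ i : Fin q, JZA i j ≠ 0).card) :
    ∃ (rG : ℕ) (HG : Matrix (Fin rG) (Fin nN) (ZMod 2))
      (S : Matrix (Fin nN) (Fin n) (ZMod 2))
      (T : Matrix (Fin rX) (Fin rG) (ZMod 2)),
      rG ≤ wmax HX * nN ∧
      HX * Sᵀ = T * HG ∧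
      (∀ i, (Finset.univ.filter fun j => S i j ≠ 0).card ≤ 1) ∧
      (∀ j, (Finset.univ.filter fun i => S i j ≠ 0).card ≤ 1) ∧
      (∀ i, (Finset.univ.filter fun j => T i j ≠ 0).card ≤ 1) ∧
      (∀ j, (Finset.univ.filter fun i => T i j ≠ 0).card ≤ 1) ∧
      rowSpan JZA ≤ Submodule.map S.vecMulLinear (LinearMap.ker HG.mulVecLin) ∧
      wmax HG ≤ wmax HX := by
  classical
  set B := Finset.univ.filter fun j : Fin n => ∃ i : Fin q, JZA i j ≠ 0
  set R := B.biUnion fun j => Finset.univ.filter fun i => HX i j ≠ 0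
  set f := B.orderEmbOfFin hnN.symm
  set g := R.orderEmbOfFin rfl
  have hJ : ∀ i, ∀ j ∉ Set.range f, JZA i j = 0 := fun i j hj => by
    rw [Finset.range_orderEmbOfFin] at hj
    have hj' : ∀ i', JZA i' j = 0 := by simpa [B] using hj
    exact hj' i
  have hH : ∀ i ∉ Set.range g, ∀ j, HX.submatrix id f i j = 0 := fun i hi j => by
    rw [Finset.range_orderEmbOfFin] at hi
    by_contra h
    exact hi (Finset.mem_biUnion.mpr ⟨f j, Finset.orderEmbOfFin_mem B _ j, by simpa using h⟩)
  refine ⟨R.card, HX.submatrix g f, (1 : Matrix (Fin n) (Fin n) (ZMod 2)).submatrix f id,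
    (1 : Matrix (Fin rX) (Fin rX) (ZMod 2)).submatrix id g,
    hnN ▸ card_biUnion_col_support_le HX B,
    ?_, card_filter_one_submatrix_row_le_one _ Function.injective_id,
    card_filter_one_submatrix_col_le_one f.injective _,
    card_filter_one_submatrix_row_le_one _ g.injective,
    card_filter_one_submatrix_col_le_one Function.injective_id _, ?_,
    wmax_submatrix_le HX g.injective f.injective⟩
  · rw [mul_transpose_one_submatrix]
    exact (one_submatrix_mul_submatrix_of_range g.injective _ hH).symm
  · rw [rowSpan, Submodule.span_le]
    rintro _ ⟨i, rfl⟩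
    refine ⟨JZA i ∘ f, ?_, vecMul_one_submatrix_of_range f.injective _ (hJ i)⟩
    change HX.submatrix g f *ᵥ (JZA i ∘ f) = 0
    rw [submatrix_mulVec_comp_of_range HX g f.injective _ (hJ i), hker i]
    rfl
end

section
/- Let H ∈ 𝔽₂^{r×n}, let a ∈ {1,…,r} be a row index, and let B ⊆ {1,…,n} be a set of column indices with H_{a,j} = 1 for all j ∈ B. Define H' ∈ 𝔽₂^{(r+1)×(n+1)} by: for i ≠ a and j ≤ n, H'_{i,j} = H_{i,j} and H'_{i,n+1} = 0; for row a, H'_{a,j} = H_{a,j} for j ≤ n with j ∉ B, H'_{a,j} = 0 for j ∈ B, and H'_{a,n+1} = 1; and row r+1 of H' has 1 exactly in the columns of B and in column n+1. Then a vector v ∈ 𝔽₂^{n+1} satisfies H' vᵀ = 0 if and only if the restriction of v to the first n coordinates lies in ker H and v_{n+1} = Σ_{j ∈ B} v_j. -/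
open Matrix

/-- check duplication: the new bit is column `Fin.last n` and the new
check is row `Fin.last r`; the duplicated check is row `a` and `B` is the set of bits
moved from `a` to the new check. -/
theorem check_duplication {r n : ℕ}
    (H : Matrix (Fin r) (Fin n) (ZMod 2))
    (a : Fin r) (B : Finset (Fin n))
    (hB : ∀ j ∈ B, H a j = 1)
    (H' : Matrix (Fin (r + 1)) (Fin (n + 1)) (ZMod 2))
    (hout : ∀ i : Fin r, i ≠ a →
      (∀ j : Fin n, H' i.castSucc j.castSucc = H i j) ∧ H' i.castSucc (Fin.last n) = 0)
    (hrowa : (∀ j : Fin n, j ∉ B → H' a.castSucc j.castSucc = H a j) ∧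
      (∀ j : Fin n, j ∈ B → H' a.castSucc j.castSucc = 0) ∧
      H' a.castSucc (Fin.last n) = 1)
    (hnew : (∀ j : Fin n, H' (Fin.last r) j.castSucc = if j ∈ B then 1 else 0) ∧
      H' (Fin.last r) (Fin.last n) = 1) :
    ∀ v : Fin (n + 1) → ZMod 2,
      H'.mulVec v = 0 ↔
        (H.mulVec (fun j => v j.castSucc) = 0 ∧
          v (Fin.last n) = ∑ j ∈ B, v j.castSucc) := by
  intro v
  set w : Fin n → ZMod 2 := fun j => v j.castSucc with hw
  have two : (2 : ZMod 2) = 0 := rfl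
  have selfadd : ∀ x : ZMod 2, x + x = 0 := by decide
  -- row last
  have hL : H'.mulVec v (Fin.last r) = (∑ j ∈ B, w j) + v (Fin.last n) := by
    simp only [mulVec, dotProduct, Fin.sum_univ_castSucc, hnew.1, hnew.2, one_mul]
    congr 1
    simp only [ite_mul, one_mul, zero_mul, Finset.sum_ite_mem, Finset.univ_inter]
    rfl
  -- split of H row a
  have hsplitH : H.mulVec w a = (∑ j ∈ B, w j) + ∑ j ∈ Bᶜ, H a j * w j := by
    simp only [mulVec, dotProduct]
    rw [← Finset.sum_add_sum_compl B]
    congr 1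
    exact Finset.sum_congr rfl fun j hj => by rw [hB j hj, one_mul]
  have hA : H'.mulVec v a.castSucc = H.mulVec w a + ((∑ j ∈ B, w j) + v (Fin.last n)) := by
    simp only [mulVec, dotProduct, Fin.sum_univ_castSucc, hrowa.2.2, one_mul]
    rw [← Finset.sum_add_sum_compl B (fun j => H' a.castSucc j.castSucc * v j.castSucc)]
    have h1 : ∑ j ∈ B, H' a.castSucc j.castSucc * v j.castSucc = 0 := by
      apply Finset.sum_eq_zero
      intro j hj; rw [hrowa.2.1 j hj, zero_mul]
    have h2 : ∑ j ∈ Bᶜ, H' a.castSucc j.castSucc * v j.castSucc = ∑ j ∈ Bᶜ, H a j * w j := by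
      apply Finset.sum_congr rfl
      intro j hj; rw [hrowa.1 j (Finset.mem_compl.mp hj)]
    rw [h1, h2, zero_add,
      ← Finset.sum_add_sum_compl B (fun j => H a j * w j),
      show ∑ j ∈ B, H a j * w j = ∑ j ∈ B, w j from
        Finset.sum_congr rfl fun j hj => by rw [hB j hj, one_mul]]
    linear_combination -selfadd (∑ j ∈ B, w j)
  have hI : ∀ i : Fin r, i ≠ a → H'.mulVec v i.castSucc = H.mulVec w i := by
    intro i hi
    simp only [mulVec, dotProduct, Fin.sum_univ_castSucc, (hout i hi).2, zero_mul, add_zero]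
    exact Finset.sum_congr rfl fun j _ => by rw [(hout i hi).1 j]
  constructor
  · intro h
    have hl0 : (∑ j ∈ B, w j) + v (Fin.last n) = 0 := by
      rw [← hL]; exact congrFun h (Fin.last r)
    have hlast : v (Fin.last n) = ∑ j ∈ B, w j := by
      have := congrArg (· + v (Fin.last n)) hl0
      simpa [add_assoc, selfadd] using this.symm
    refine ⟨?_, hlast⟩
    funext i
    by_cases hi : i = a
    · rw [hi]
      have := congrFun h a.castSucc
      rw [hA, hl0, add_zero] at this
      simpa using this
    · have := congrFun h i.castSucc
      rw [hI i hi] at this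
      simpa using this
  · rintro ⟨hk, hlast⟩
    funext i
    refine Fin.lastCases ?_ ?_ i
    · rw [hL, ← hlast, selfadd]; rfl
    · intro i
      by_cases hi : i = a
      · rw [hi, hA, hlast, selfadd, add_zero, congrFun hk a]; rfl
      · rw [hI i hi, congrFun hk i]; rfl
end

section
/- (Kernel of a dressed check matrix.) Let H ∈ 𝔽₂^{r×m}, G_a ∈ 𝔽₂^{p×m}, G_b ∈ 𝔽₂^{s×m} be such that the rows of the stacked matrix (G_a; G_b) are linearly independent and rs(G_a; G_b) = ker H. Let D ∈ 𝔽₂^{s×m} satisfy D G_aᵀ = 0 and D G_bᵀ = E_s. Then the right kernel of the stacked matrix (H; D) equals rs G_a; that is, a vector v ∈ 𝔽₂^m satisfies H vᵀ = 0 and D vᵀ = 0 if and only if v ∈ rs G_a. -/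
/-!
Every `v ∈ ker H = rs G_a ⊔ rs G_b` splits as `x + c ᵥ* G_b` with `x ∈ rs G_a`. Since
`D G_aᵀ = 0` kills `x` and `D G_bᵀ = E_s`, we get `D vᵀ = c`, so `D vᵀ = 0` forces `c = 0`.
-/

open Matrix

namespace Matrix

variable {R ι κ α β : Type*} [CommRing R] [Fintype α]

theorem exists_vecMul_eq_of_mem_span_range {A : Matrix α κ R} {v : κ → R}
    (hv : v ∈ Submodule.span R (Set.range A)) : ∃ c, c ᵥ* A = v :=
  LinearMap.mem_range.mp ((range_vecMulLinear A).ge hv)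

variable [Fintype κ]

theorem mulVec_vecMul_eq (D : Matrix ι κ R) (G : Matrix α κ R) (c : α → R) :
    D *ᵥ (c ᵥ* G) = (D * Gᵀ) *ᵥ c := by
  rw [← mulVec_transpose, mulVec_mulVec]

variable {D : Matrix β κ R} {A : Matrix α κ R} {v : κ → R}

theorem mulVec_eq_zero_of_mem_span_range (hDA : D * Aᵀ = 0)
    (hv : v ∈ Submodule.span R (Set.range A)) : D *ᵥ v = 0 := by
  obtain ⟨c, rfl⟩ := exists_vecMul_eq_of_mem_span_range hv
  rw [mulVec_vecMul_eq, hDA, zero_mulVec]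

theorem mem_span_range_of_mulVec_eq_zero [Fintype β] [DecidableEq β] {B : Matrix β κ R}
    (hDA : D * Aᵀ = 0) (hDB : D * Bᵀ = 1)
    (hv : v ∈ Submodule.span R (Set.range A) ⊔ Submodule.span R (Set.range B))
    (hDv : D *ᵥ v = 0) : v ∈ Submodule.span R (Set.range A) := by
  obtain ⟨x, hx, y, hy, rfl⟩ := Submodule.mem_sup.mp hv
  obtain ⟨c, rfl⟩ := exists_vecMul_eq_of_mem_span_range hy
  have hc : c = 0 := by
    rwa [mulVec_add, mulVec_eq_zero_of_mem_span_range hDA hx, mulVec_vecMul_eq, hDB, one_mulVec,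
      zero_add] at hDv
  simpa [hc] using hx

end Matrix

theorem dressed_check_matrix_kernel_general {r m p s : ℕ}
    (H : Matrix (Fin r) (Fin m) (ZMod 2))
    (Ga : Matrix (Fin p) (Fin m) (ZMod 2))
    (Gb : Matrix (Fin s) (Fin m) (ZMod 2))
    (hspan : Submodule.span (ZMod 2) (Set.range (Sum.elim Ga Gb)) =
      LinearMap.ker H.mulVecLin)
    (D : Matrix (Fin s) (Fin m) (ZMod 2))
    (hDa : D * Gaᵀ = 0)
    (hDb : D * Gbᵀ = 1) :
    ∀ v : Fin m → ZMod 2,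
      (H.mulVec v = 0 ∧ D.mulVec v = 0) ↔ v ∈ rowSpan Ga := by
  rw [show Set.range (Sum.elim Ga Gb) = Set.range Ga ∪ Set.range Gb from Set.Sum.elim_range _ _,
    Submodule.span_union] at hspan
  intro v
  have hker : H *ᵥ v = 0 ↔ v ∈ rowSpan Ga ⊔ rowSpan Gb := by
    rw [rowSpan, rowSpan, hspan]
    rfl
  rw [hker]
  exact ⟨fun ⟨hv, hDv⟩ => mem_span_range_of_mulVec_eq_zero hDa hDb hv hDv,
    fun hv => ⟨Submodule.mem_sup_left hv, mulVec_eq_zero_of_mem_span_range hDa hv⟩⟩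

/-- kernel of a dressed check matrix. If the rows of the stacked
matrix `(G_a; G_b)` are independent and span `ker H`, and `D G_aᵀ = 0`,
`D G_bᵀ = E_s`, then the right kernel of `(H; D)` equals `rs G_a`. -/
theorem dressed_check_matrix_kernel {r m p s : ℕ}
    (H : Matrix (Fin r) (Fin m) (ZMod 2))
    (Ga : Matrix (Fin p) (Fin m) (ZMod 2))
    (Gb : Matrix (Fin s) (Fin m) (ZMod 2))
    (hli : LinearIndependent (ZMod 2) (Sum.elim Ga Gb))
    (hspan : Submodule.span (ZMod 2) (Set.range (Sum.elim Ga Gb)) =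
      LinearMap.ker H.mulVecLin)
    (D : Matrix (Fin s) (Fin m) (ZMod 2))
    (hDa : D * Gaᵀ = 0)
    (hDb : D * Gbᵀ = 1) :
    ∀ v : Fin m → ZMod 2,
      (H.mulVec v = 0 ∧ D.mulVec v = 0) ↔ v ∈ rowSpan Ga :=
  dressed_check_matrix_kernel_general H Ga Gb hspan D hDa hDb
end

section
/- (Full row rank of U in the dressing construction.) Let S ∈ 𝔽₂^{n_N×n} satisfy S Sᵀ = E_{n_N}. Let K ⊆ 𝔽₂^{n_N} be a subspace and W ⊆ 𝔽₂^n a subspace such that K·S ∩ W ⊆ (rs G_0)·S, where G_0 ∈ 𝔽₂^{g_0×n_N} has all its rows in K. Let G_2 ∈ 𝔽₂^{g_2×n_N} have all its rows in K, and suppose the rows of the stacked matrix (G_0; G_2) are linearly independent. Suppose J_C ∈ 𝔽₂^{(k−q)×n}, U ∈ 𝔽₂^{g_2×(k−q)}, and M ∈ 𝔽₂^{g_2×n} satisfy G_2 S = U J_C + M with every row of M in W, and x U = 0 implies x M ∈ W for all x (which holds automatically). Then U has linearly independent rows; that is, for every x ∈ 𝔽₂^{g_2}, x U = 0 implies x =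 0. -/
/-!
Multiplying `G₂ S = U J_C + M` on the left by `x` with `x U = 0` gives `(x G₂) S = x M ∈ W`.
Since also `x G₂ ∈ K`, the hypothesis on `K·S ∩ W` puts `(x G₂) S` in `(rs G₀)·S`; as `S` has the
right inverse `Sᵀ`, multiplication by `S` is injective, so `x G₂ ∈ rs G₀`. Linear independence of
the rows of `(G₀; G₂)` then forces `x = 0`.
-/

open Matrix

theorem Submodule.mem_of_map_inf_le_map {R M N : Type*} [Semiring R] [AddCommMonoid M]
    [AddCommMonoid N] [Module R M] [Module R N] {f : M →ₗ[R] N} (hf : Function.Injective f)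
    {K P : Submodule R M} {W : Submodule R N} (hKW : K.map f ⊓ W ≤ P.map f)
    {v : M} (hvK : v ∈ K) (hvW : f v ∈ W) : v ∈ P := by
  obtain ⟨w, hwP, hwv⟩ := hKW ⟨⟨v, hvK, rfl⟩, hvW⟩
  exact hf hwv ▸ hwP

namespace Matrix

variable {R : Type*} [CommRing R] {l m n : Type*} [Fintype m]

theorem vecMul_mem_of_forall_row_mem {p : Submodule R (n → R)} {A : Matrix m n R}
    (hA : ∀ i, A i ∈ p) (x : m → R) : x ᵥ* A ∈ p := by
  rw [vecMul_eq_sum]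
  exact sum_mem fun i _ => p.smul_mem _ (hA i)

theorem vecMul_injective_of_mul_eq_one [Fintype n] [DecidableEq m] {S : Matrix m n R}
    {T : Matrix n m R} (h : S * T = 1) : Function.Injective S.vecMul :=
  Function.LeftInverse.injective (g := T.vecMul) fun v => by
    simp only [vecMul_vecMul, h, vecMul_one]

theorem eq_zero_of_vecMul_mem_span_of_linearIndependent {A : Matrix l n R} {B : Matrix m n R}
    (h : LinearIndependent R (Sum.elim A B)) {x : m → R}
    (hx : x ᵥ* B ∈ Submodule.span R (Set.range A)) : x = 0 := by
  obtain ⟨-, hB, hAB⟩ := linearIndependent_sum.1 h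
  have hxB : x ᵥ* B ∈ Submodule.span R (Set.range B) :=
    vecMul_mem_of_forall_row_mem (fun i => Submodule.subset_span (Set.mem_range_self i)) x
  have hzero : x ᵥ* B = 0 ᵥ* B := by
    rw [zero_vecMul]
    exact Submodule.disjoint_def.1 hAB _ hx hxB
  exact vecMul_injective_iff.2 hB hzero

end Matrix

theorem dressing_U_full_row_rank_general {nN n g0 g2 pk : ℕ}
    (S : Matrix (Fin nN) (Fin n) (ZMod 2))
    (hS : S * Sᵀ = 1)
    (K : Submodule (ZMod 2) (Fin nN → ZMod 2))
    (W : Submodule (ZMod 2) (Fin n → ZMod 2))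
    (G0 : Matrix (Fin g0) (Fin nN) (ZMod 2))
    (hKW : Submodule.map S.vecMulLinear K ⊓ W ≤
      Submodule.map S.vecMulLinear (rowSpan G0))
    (G2 : Matrix (Fin g2) (Fin nN) (ZMod 2))
    (hG2 : ∀ i, G2 i ∈ K)
    (hli : LinearIndependent (ZMod 2) (Sum.elim G0 G2))
    (JC : Matrix (Fin pk) (Fin n) (ZMod 2))
    (U : Matrix (Fin g2) (Fin pk) (ZMod 2))
    (M : Matrix (Fin g2) (Fin n) (ZMod 2))
    (hGSM : G2 * S = U * JC + M)
    (hM : ∀ i, M i ∈ W) :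
    ∀ x : Fin g2 → ZMod 2, vecMul x U = 0 → x = 0 := by
  intro x hx
  have hxS : (x ᵥ* G2) ᵥ* S = x ᵥ* M := by
    rw [vecMul_vecMul, hGSM, vecMul_add, ← vecMul_vecMul, hx, zero_vecMul, zero_add]
  have hxK : x ᵥ* G2 ∈ K := vecMul_mem_of_forall_row_mem hG2 x
  have hxW : S.vecMulLinear (x ᵥ* G2) ∈ W := by
    rw [vecMulLinear_apply, hxS]
    exact vecMul_mem_of_forall_row_mem hM x
  exact eq_zero_of_vecMul_mem_span_of_linearIndependent hli <|
    Submodule.mem_of_map_inf_le_map (vecMul_injective_of_mul_eq_one hS) hKW hxK hxW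

/-- full row rank of `U` in the dressing construction. Here `K` plays
the role of `ker H_N`, `W` the role of `rs H_Z ⊕ rs F_Z`, `J_C` the role of
`J_{Z,C}`, and `S` the pasting matrix `S_N` with orthonormal rows
(`S Sᵀ = E_{n_N}`). -/
theorem dressing_U_full_row_rank {nN n g0 g2 pk : ℕ}
    (S : Matrix (Fin nN) (Fin n) (ZMod 2))
    (hS : S * Sᵀ = 1)
    (K : Submodule (ZMod 2) (Fin nN → ZMod 2))
    (W : Submodule (ZMod 2) (Fin n → ZMod 2))
    (G0 : Matrix (Fin g0) (Fin nN) (ZMod 2))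
    (hG0 : ∀ i, G0 i ∈ K)
    (hKW : Submodule.map S.vecMulLinear K ⊓ W ≤
      Submodule.map S.vecMulLinear (rowSpan G0))
    (G2 : Matrix (Fin g2) (Fin nN) (ZMod 2))
    (hG2 : ∀ i, G2 i ∈ K)
    (hli : LinearIndependent (ZMod 2) (Sum.elim G0 G2))
    (JC : Matrix (Fin pk) (Fin n) (ZMod 2))
    (U : Matrix (Fin g2) (Fin pk) (ZMod 2))
    (M : Matrix (Fin g2) (Fin n) (ZMod 2))
    (hGSM : G2 * S = U * JC + M)
    (hM : ∀ i, M i ∈ W)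
    (hauto : ∀ x : Fin g2 → ZMod 2, vecMul x U = 0 → vecMul x M ∈ W) :
    ∀ x : Fin g2 → ZMod 2, vecMul x U = 0 → x = 0 :=
  dressing_U_full_row_rank_general S hS K W G0 hKW G2 hG2 hli JC U M hGSM hM
end

section
/- (Regularisation of a commuting set of Pauli operators.) Let n ≥ 1 and let Θ be a finite set of pairs (x, z) ∈ 𝔽₂^n × 𝔽₂^n such that any two elements (x, z), (x', z') ∈ Θ satisfy x·z' + z·x' = 0 over 𝔽₂ (the corresponding Pauli operators pairwise commute). Then there exist finite sets Θ', Θ'' of pairs in 𝔽₂^n × 𝔽₂^n such that: every element of Θ' and of Θ'' lies in the 𝔽₂-span of Θ (inside 𝔽₂^{2n}); the 𝔽₂-span of Θ' ∪ Θ'' equals the 𝔽₂-span of Θ; and both Θ' and Θ'' are regular, meaning that any two distinct elements (x, z), (x', z') of the same set satisfy x·z' = 0. -/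
open Matrix

section Aux
open Submodule

open Submodule

variable {M : Type*} [AddCommGroup M] [Module (ZMod 2) M]
variable (B : M →ₗ[ZMod 2] M →ₗ[ZMod 2] (ZMod 2))

lemma sym_span {S : Set M} (hsym : ∀ s ∈ S, ∀ t ∈ S, B s t = B t s)
    {x y : M} (hx : x ∈ span (ZMod 2) S) (hy : y ∈ span (ZMod 2) S) :
    B x y = B y x := by
  induction hx using Submodule.span_induction with
  | mem s hs =>
    induction hy using Submodule.span_induction with
    | mem t ht => exact hsym s hs t ht
    | zero => simp
    | add a b ha hb iha ihb => simp [iha, ihb]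
    | smul c a ha iha => simp [iha]
  | zero => simp
  | add a b ha hb iha ihb => simp [iha, ihb]
  | smul c a ha iha => simp [iha]

lemma zmod2_ne_zero {a : ZMod 2} (h : a ≠ 0) : a = 1 := by revert h; revert a; decide

lemma zmod2_add_self (a : ZMod 2) : a + a = 0 := by revert a; decide

lemma m_add_self (x : M) : x + x = 0 := by
  have h : (2 : ZMod 2) • x = 0 := by rw [show (2 : ZMod 2) = 0 by decide, zero_smul]
  rwa [two_smul] at h

lemma cancel2 (x a b : M) : x + a + b + a + b = x := by
  have h : x + a + b + a + b = x + (a + a) + (b + b) := by abel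
  rw [h, m_add_self, m_add_self, add_zero, add_zero]

lemma key_s17 [DecidableEq M] (S : Finset M) (hsym : ∀ s ∈ S, ∀ t ∈ S, B s t = B t s) :
    ∃ T T' : Finset M,
      (∀ p ∈ T, p ∈ span (ZMod 2) (S : Set M)) ∧
      (∀ p ∈ T', p ∈ span (ZMod 2) (S : Set M)) ∧
      span (ZMod 2) ((T ∪ T' : Finset M) : Set M) = span (ZMod 2) (S : Set M) ∧
      (∀ p ∈ T, ∀ q ∈ T, p ≠ q → B p q = 0) ∧
      (∀ p ∈ T', ∀ q ∈ T', p ≠ q → B p q = 0) := by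
  obtain ⟨n, hn⟩ : ∃ n, S.card = n := ⟨_, rfl⟩
  induction n using Nat.strong_induction_on generalizing S with
  | _ n ih =>
  by_cases h0 : ∀ s ∈ S, ∀ t ∈ S, B s t = 0
  · refine ⟨S, ∅, fun p hp => subset_span hp, by simp, by simp, fun p hp q hq _ => h0 p hp q hq,
      by simp⟩
  push_neg at h0
  obtain ⟨s, hs, t, ht, hst⟩ := h0
  have hsymS : ∀ x ∈ span (ZMod 2) (S : Set M), ∀ y ∈ span (ZMod 2) (S : Set M),
      B x y = B y x := fun x hx y hy => sym_span B hsym hx hy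
  by_cases hdiag : ∃ u ∈ S, B u u ≠ 0
  · -- Case A : non-isotropic vector u
    obtain ⟨u, hu, huu⟩ := hdiag
    have huu1 : B u u = 1 := zmod2_ne_zero huu
    set f : M → M := fun r => r + (B r u) • u with hf
    set S₀ : Finset M := (S.erase u).image f with hS₀
    have hS₀span : (S₀ : Set M) ⊆ (span (ZMod 2) (S : Set M) : Set M) := by
      intro x hx
      simp only [hS₀, Finset.coe_image, Set.mem_image, Finset.coe_erase] at hx
      obtain ⟨r, hr, rfl⟩ := hx
      exact add_mem (subset_span hr.1) (smul_mem _ _ (subset_span hu))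
    have hkeru : ∀ x ∈ S₀, B x u = 0 := by
      intro x hx
      simp only [hS₀, Finset.mem_image, Finset.mem_erase] at hx
      obtain ⟨r, hr, rfl⟩ := hx
      simp only [hf, map_add, _root_.map_smul, LinearMap.add_apply, LinearMap.smul_apply,
        smul_eq_mul, huu1, mul_one]
      exact zmod2_add_self _
    have hkeru' : ∀ x ∈ S₀, B u x = 0 := fun x hx => by
      rw [hsymS u (subset_span hu) x (hS₀span hx)]; exact hkeru x hx
    have hcard : S₀.card < n := by
      rw [← hn]
      calc S₀.card ≤ (S.erase u).card := Finset.card_image_le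
        _ < S.card := Finset.card_erase_lt_of_mem hu
    obtain ⟨T, T', hT, hT', hspan, hreg, hreg'⟩ := ih S₀.card hcard S₀
      (fun a ha b hb => hsymS a (hS₀span ha) b (hS₀span hb)) rfl
    have hspanS₀ : span (ZMod 2) ((S₀ : Finset M) : Set M) ≤ span (ZMod 2) (S : Set M) :=
      span_le.2 hS₀span
    have hkerspan : ∀ x ∈ span (ZMod 2) ((S₀ : Finset M) : Set M), B x u = 0 ∧ B u x = 0 := by
      intro x hx
      constructor
      · have : span (ZMod 2) ((S₀ : Finset M) : Set M) ≤ LinearMap.ker (B.flip u) :=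
          span_le.2 fun y hy => LinearMap.mem_ker.2 (hkeru y hy)
        exact this hx
      · have : span (ZMod 2) ((S₀ : Finset M) : Set M) ≤ LinearMap.ker (B u) :=
          span_le.2 fun y hy => LinearMap.mem_ker.2 (hkeru' y hy)
        exact this hx
    refine ⟨insert u T, T', ?_, fun p hp => hspanS₀ (hT' p hp), ?_, ?_, hreg'⟩
    · intro p hp
      rcases Finset.mem_insert.1 hp with rfl | hp
      · exact subset_span hu
      · exact hspanS₀ (hT p hp)
    · -- span equality
      rw [Finset.insert_union, Finset.coe_insert, span_insert, hspan]
      apply le_antisymm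
      · exact sup_le (span_le.2 (by simpa using subset_span hu)) hspanS₀
      · rw [span_le]
        intro r hr
        by_cases hru : r = u
        · exact hru ▸ le_sup_left (α := Submodule (ZMod 2) M) (subset_span rfl)
        · have hr' : f r ∈ S₀ := Finset.mem_image_of_mem f (Finset.mem_erase.2 ⟨hru, hr⟩)
          have : r = f r + (B r u) • u := by
            simp only [hf]
            rw [add_assoc, ← add_smul, zmod2_add_self, zero_smul, add_zero]
          rw [this]
          exact add_mem (mem_sup_right (subset_span hr'))
            (mem_sup_left (smul_mem _ _ (subset_span rfl)))
    · -- regularity of insert u T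
      intro p hp q hq hpq
      rcases Finset.mem_insert.1 hp with hp1 | hp1 <;> rcases Finset.mem_insert.1 hq with hq1 | hq1
      · exact absurd (hp1.trans hq1.symm) hpq
      · rw [hp1]; exact (hkerspan q (hT q hq1)).2
      · rw [hq1]; exact (hkerspan p (hT p hp1)).1
      · exact hreg p hp1 q hq1 hpq
  · -- Case B : alternating form, hyperbolic pair s t
    push_neg at hdiag
    have hstne : s ≠ t := by rintro rfl; exact hst (hdiag s hs)
    have hst1 : B s t = 1 := zmod2_ne_zero hst
    have hts1 : B t s = 1 := by rw [hsym t ht s hs, hst1]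
    set g : M → M := fun r => r + (B r t) • s + (B r s) • t with hg
    set S₀ : Finset M := ((S.erase s).erase t).image g with hS₀
    have hS₀span : (S₀ : Set M) ⊆ (span (ZMod 2) (S : Set M) : Set M) := by
      intro x hx
      simp only [hS₀, Finset.coe_image, Set.mem_image, Finset.mem_coe, Finset.mem_erase] at hx
      obtain ⟨r, hr, rfl⟩ := hx
      exact add_mem (add_mem (subset_span hr.2.2) (smul_mem _ _ (subset_span hs)))
        (smul_mem _ _ (subset_span ht))
    have hkers : ∀ x ∈ S₀, B x s = 0 := by
      intro x hx
      simp only [hS₀, Finset.mem_image, Finset.mem_erase] at hx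
      obtain ⟨r, hr, rfl⟩ := hx
      simp only [hg, map_add, _root_.map_smul, LinearMap.add_apply, LinearMap.smul_apply,
        smul_eq_mul, hdiag s hs, hts1, mul_zero, mul_one, add_zero]
      exact zmod2_add_self _
    have hkert : ∀ x ∈ S₀, B x t = 0 := by
      intro x hx
      simp only [hS₀, Finset.mem_image, Finset.mem_erase] at hx
      obtain ⟨r, hr, rfl⟩ := hx
      simp only [hg, map_add, _root_.map_smul, LinearMap.add_apply, LinearMap.smul_apply,
        smul_eq_mul, hdiag t ht, hst1, mul_zero, mul_one, add_zero]
      exact zmod2_add_self _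
    have hkers' : ∀ x ∈ S₀, B s x = 0 := fun x hx => by
      rw [hsymS s (subset_span hs) x (hS₀span hx)]; exact hkers x hx
    have hkert' : ∀ x ∈ S₀, B t x = 0 := fun x hx => by
      rw [hsymS t (subset_span ht) x (hS₀span hx)]; exact hkert x hx
    have hcard : S₀.card < n := by
      rw [← hn]
      calc S₀.card ≤ ((S.erase s).erase t).card := Finset.card_image_le
        _ ≤ (S.erase s).card := Finset.card_le_card (Finset.erase_subset _ _)
        _ < S.card := Finset.card_erase_lt_of_mem hs
    obtain ⟨T, T', hT, hT', hspan, hreg, hreg'⟩ := ih S₀.card hcard S₀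
      (fun a ha b hb => hsymS a (hS₀span ha) b (hS₀span hb)) rfl
    have hspanS₀ : span (ZMod 2) ((S₀ : Finset M) : Set M) ≤ span (ZMod 2) (S : Set M) :=
      span_le.2 hS₀span
    have hkerspan : ∀ w : M, (∀ x ∈ S₀, B x w = 0) → (∀ x ∈ S₀, B w x = 0) →
        ∀ x ∈ span (ZMod 2) ((S₀ : Finset M) : Set M), B x w = 0 ∧ B w x = 0 := by
      intro w h1 h2 x hx
      constructor
      · have : span (ZMod 2) ((S₀ : Finset M) : Set M) ≤ LinearMap.ker (B.flip w) :=
          span_le.2 fun y hy => LinearMap.mem_ker.2 (h1 y hy)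
        exact this hx
      · have : span (ZMod 2) ((S₀ : Finset M) : Set M) ≤ LinearMap.ker (B w) :=
          span_le.2 fun y hy => LinearMap.mem_ker.2 (h2 y hy)
        exact this hx
    refine ⟨insert s T, insert t T', ?_, ?_, ?_, ?_, ?_⟩
    · intro p hp
      rcases Finset.mem_insert.1 hp with rfl | hp
      · exact subset_span hs
      · exact hspanS₀ (hT p hp)
    · intro p hp
      rcases Finset.mem_insert.1 hp with rfl | hp
      · exact subset_span ht
      · exact hspanS₀ (hT' p hp)
    · -- span equality
      have hU : insert s T ∪ insert t T' = insert s (insert t (T ∪ T')) := by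
        rw [Finset.insert_union, Finset.union_insert]
      rw [hU, Finset.coe_insert, Finset.coe_insert, span_insert, span_insert, hspan]
      apply le_antisymm
      · exact sup_le (span_le.2 (by simpa using subset_span hs))
          (sup_le (span_le.2 (by simpa using subset_span ht)) hspanS₀)
      · rw [span_le]
        intro r hr
        by_cases hrs : r = s
        · exact hrs ▸ mem_sup_left (subset_span rfl)
        by_cases hrt : r = t
        · exact hrt ▸ mem_sup_right (mem_sup_left (subset_span rfl))
        have hr' : g r ∈ S₀ :=
          Finset.mem_image_of_mem g (Finset.mem_erase.2 ⟨hrt, Finset.mem_erase.2 ⟨hrs, hr⟩⟩)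
        have : r = g r + (B r t) • s + (B r s) • t := by
          simp only [hg]
          exact (cancel2 r _ _).symm
        rw [this]
        refine add_mem (add_mem (mem_sup_right (mem_sup_right (subset_span hr')))
          (mem_sup_left (smul_mem _ _ (subset_span rfl))))
          (mem_sup_right (mem_sup_left (smul_mem _ _ (subset_span rfl))))
    · intro p hp q hq hpq
      rcases Finset.mem_insert.1 hp with hp1 | hp1 <;> rcases Finset.mem_insert.1 hq with hq1 | hq1
      · exact absurd (hp1.trans hq1.symm) hpq
      · rw [hp1]; exact (hkerspan s hkers hkers' q (hT q hq1)).2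
      · rw [hq1]; exact (hkerspan s hkers hkers' p (hT p hp1)).1
      · exact hreg p hp1 q hq1 hpq
    · intro p hp q hq hpq
      rcases Finset.mem_insert.1 hp with hp1 | hp1 <;> rcases Finset.mem_insert.1 hq with hq1 | hq1
      · exact absurd (hp1.trans hq1.symm) hpq
      · rw [hp1]; exact (hkerspan t hkert hkert' q (hT' q hq1)).2
      · rw [hq1]; exact (hkerspan t hkert hkert' p (hT' p hp1)).1
      · exact hreg' p hp1 q hq1 hpq

end Aux

/-- regularisation of a commuting set of Pauli operators. A Pauli
operator on `n` qubits is identified with a pair `(x, z) ∈ 𝔽₂ⁿ × 𝔽₂ⁿ`; two Pauli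
operators commute iff `x ⬝ᵥ z' + z ⬝ᵥ x' = 0`; a set is regular if any two distinct
elements `(x, z)`, `(x', z')` satisfy `x ⬝ᵥ z' = 0`. -/
theorem regularisation_of_commuting_paulis {n : ℕ} (hn : 1 ≤ n)
    (Θ : Finset ((Fin n → ZMod 2) × (Fin n → ZMod 2)))
    (hcomm : ∀ p ∈ Θ, ∀ p' ∈ Θ, p.1 ⬝ᵥ p'.2 + p.2 ⬝ᵥ p'.1 = 0) :
    ∃ Θ' Θ'' : Finset ((Fin n → ZMod 2) × (Fin n → ZMod 2)),
      (∀ p ∈ Θ', p ∈ Submodule.span (ZMod 2)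
        ((Θ : Set ((Fin n → ZMod 2) × (Fin n → ZMod 2))))) ∧
      (∀ p ∈ Θ'', p ∈ Submodule.span (ZMod 2)
        ((Θ : Set ((Fin n → ZMod 2) × (Fin n → ZMod 2))))) ∧
      Submodule.span (ZMod 2)
          ((Θ' ∪ Θ'' : Finset ((Fin n → ZMod 2) × (Fin n → ZMod 2))) :
            Set ((Fin n → ZMod 2) × (Fin n → ZMod 2))) =
        Submodule.span (ZMod 2)
          ((Θ : Set ((Fin n → ZMod 2) × (Fin n → ZMod 2)))) ∧
      (∀ p ∈ Θ', ∀ p' ∈ Θ', p ≠ p' → p.1 ⬝ᵥ p'.2 = 0) ∧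
      (∀ p ∈ Θ'', ∀ p' ∈ Θ'', p ≠ p' → p.1 ⬝ᵥ p'.2 = 0) := by
  classical
  set B : ((Fin n → ZMod 2) × (Fin n → ZMod 2)) →ₗ[ZMod 2]
      ((Fin n → ZMod 2) × (Fin n → ZMod 2)) →ₗ[ZMod 2] ZMod 2 :=
    LinearMap.mk₂ (ZMod 2) (fun p q => p.1 ⬝ᵥ q.2)
      (fun p p' q => by simp [add_dotProduct])
      (fun c p q => by simp [smul_dotProduct])
      (fun p q q' => by simp [dotProduct_add])
      (fun c p q => by simp [dotProduct_smul]) with hB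
  have hBapp : ∀ p q, B p q = p.1 ⬝ᵥ q.2 := fun p q => rfl
  have hsym : ∀ s ∈ Θ, ∀ t ∈ Θ, B s t = B t s := by
    intro s hs t ht
    have h := hcomm s hs t ht
    have h1 : s.1 ⬝ᵥ t.2 = s.2 ⬝ᵥ t.1 := by
      have := eq_neg_of_add_eq_zero_left h
      rwa [CharTwo.neg_eq] at this
    rw [hBapp, hBapp, h1, dotProduct_comm]
  obtain ⟨T, T', h1, h2, h3, h4, h5⟩ := key_s17 B Θ hsym
  exact ⟨T, T', h1, h2, h3, fun p hp q hq hpq => h4 p hp q hq hpq,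
    fun p hp q hq hpq => h5 p hp q hq hpq⟩
end

section
/- (Reduction of a deformed-code X-type error to a memory error.) Let H_X ∈ 𝔽₂^{r_X×n}, H_G ∈ 𝔽₂^{r_G×n_G}, S ∈ 𝔽₂^{n_G×n}, T ∈ 𝔽₂^{r_X×r_G} with H_X Sᵀ = T H_G. Let m ≥ 1 and let u_0 ∈ 𝔽₂^n, u_1,…,u_m ∈ 𝔽₂^{n_G}, v_1,…,v_{m+1} ∈ 𝔽₂^{r_G} satisfy H_X u_0ᵀ = T v_1ᵀ and H_G u_jᵀ = v_jᵀ + v_{j+1}ᵀ for j = 1,…,m. Suppose v_l = 0 for some l ∈ {1,…,m+1}, and set u = u_0 + Σ_{j=1}^{l−1} u_j S. Then: (a) H_X uᵀ = 0; (b) if moreover J ∈ 𝔽₂^{p×n} and γ ∈ 𝔽₂^{p×r_G} satisfy J Sᵀ = γ H_G and J u_0ᵀ + J Sᵀ (Σ_{j=1}^{m} u_jᵀ) + γ v_{m+1}ᵀ ≠ 0, then J uᵀ ≠ 0. -/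
open Matrix

/-- reduction of a deformed-code `X`-type error to a memory error.
Here `u j0` (for `j0 : Fin m`) stands for `u_{j0+1}` and `v i0` (for
`i0 : Fin (m+1)`) stands for `v_{i0+1}`, and `l0 : Fin (m+1)` stands for the index
`l = l0 + 1 ∈ {1,…,m+1}` with `v_l = 0`. The reduced error is
`u = u_0 + Σ_{j=1}^{l−1} u_j S`. -/
theorem deformed_error_reduction {n nG rX rG p : ℕ} (m : ℕ) (hm : 1 ≤ m)
    (HX : Matrix (Fin rX) (Fin n) (ZMod 2))
    (HG : Matrix (Fin rG) (Fin nG) (ZMod 2))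
    (S : Matrix (Fin nG) (Fin n) (ZMod 2))
    (T : Matrix (Fin rX) (Fin rG) (ZMod 2))
    (hcompat : HX * Sᵀ = T * HG)
    (u0 : Fin n → ZMod 2)
    (u : Fin m → Fin nG → ZMod 2)
    (v : Fin (m + 1) → Fin rG → ZMod 2)
    (hu0 : HX.mulVec u0 = T.mulVec (v 0))
    (hu : ∀ j : Fin m, HG.mulVec (u j) = v j.castSucc + v j.succ)
    (l0 : Fin (m + 1)) (hl : v l0 = 0) :
    HX.mulVec (u0 + ∑ j ∈ Finset.univ.filter fun j : Fin m => (j : ℕ) < (l0 : ℕ),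
        vecMul (u j) S) = 0 ∧
    ∀ (J : Matrix (Fin p) (Fin n) (ZMod 2)) (γ : Matrix (Fin p) (Fin rG) (ZMod 2)),
      J * Sᵀ = γ * HG →
      J.mulVec u0 + (J * Sᵀ).mulVec (∑ j : Fin m, u j) +
          γ.mulVec (v (Fin.last m)) ≠ 0 →
      J.mulVec (u0 + ∑ j ∈ Finset.univ.filter fun j : Fin m => (j : ℕ) < (l0 : ℕ),
        vecMul (u j) S) ≠ 0 := by
  classical
  have h2 : ∀ a : ZMod 2, a + a = 0 := by decide
  have msum : ∀ {q : ℕ} (A : Matrix (Fin q) (Fin nG) (ZMod 2)) (s : Finset (Fin m)),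
      A.mulVec (∑ j ∈ s, u j) = ∑ j ∈ s, A.mulVec (u j) := by
    intro q A s
    exact map_sum (Matrix.mulVecLin A) u s
  -- telescoping sum
  have tele : ∀ k : ℕ, ∀ hk : k ≤ m,
      HG.mulVec (∑ j ∈ Finset.univ.filter fun j : Fin m => (j : ℕ) < k, u j)
        = v 0 + v ⟨k, Nat.lt_succ_of_le hk⟩ := by
    intro k
    induction k with
    | zero =>
        intro hk
        have he : (Finset.univ.filter fun j : Fin m => (j : ℕ) < 0) = ∅ := by
          ext j; simp
        rw [he]
        simp only [Finset.sum_empty, Matrix.mulVec_zero]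
        ext i
        have h0 : (0 : Fin (m+1)) = ⟨0, Nat.lt_succ_of_le hk⟩ := rfl
        rw [← h0]
        simp only [Pi.zero_apply, Pi.add_apply]
        exact (h2 (v 0 i)).symm
    | succ k ih =>
        intro hk
        have hk' : k ≤ m := Nat.le_of_succ_le hk
        have hkm : k < m := hk
        have hset : (Finset.univ.filter fun j : Fin m => (j : ℕ) < k + 1)
            = insert ⟨k, hkm⟩ (Finset.univ.filter fun j : Fin m => (j : ℕ) < k) := by
          ext j
          simp only [Finset.mem_filter, Finset.mem_univ, true_and, Finset.mem_insert,
            Fin.ext_iff]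
          omega
        rw [hset, Finset.sum_insert (by simp), Matrix.mulVec_add, hu, ih hk']
        have h1 : (⟨k, hkm⟩ : Fin m).castSucc = (⟨k, Nat.lt_succ_of_le hk'⟩ : Fin (m+1)) := rfl
        have hs : (⟨k, hkm⟩ : Fin m).succ = (⟨k+1, Nat.lt_succ_of_le hk⟩ : Fin (m+1)) := rfl
        rw [h1, hs]
        ext i
        simp only [Pi.add_apply]
        linear_combination h2 (v ⟨k, Nat.lt_succ_of_le hk'⟩ i)
  have hl0 : (l0 : ℕ) ≤ m := Nat.lt_succ_iff.mp l0.isLt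
  have hfl : (⟨(l0 : ℕ), Nat.lt_succ_of_le hl0⟩ : Fin (m+1)) = l0 := rfl
  have hGl : HG.mulVec (∑ j ∈ Finset.univ.filter fun j : Fin m => (j : ℕ) < (l0 : ℕ), u j)
      = v 0 := by
    rw [tele (l0 : ℕ) hl0, hfl, hl, add_zero]
  -- rewrite the vecMul sum
  have hwsum : (∑ j ∈ Finset.univ.filter fun j : Fin m => (j : ℕ) < (l0 : ℕ), vecMul (u j) S)
      = Sᵀ.mulVec (∑ j ∈ Finset.univ.filter fun j : Fin m => (j : ℕ) < (l0 : ℕ), u j) := by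
    rw [msum]
    exact Finset.sum_congr rfl fun j _ => (Matrix.mulVec_transpose S (u j)).symm
  set w := ∑ j ∈ Finset.univ.filter fun j : Fin m => (j : ℕ) < (l0 : ℕ), u j with hw
  constructor
  · rw [Matrix.mulVec_add, hu0, hwsum, Matrix.mulVec_mulVec, hcompat,
      ← Matrix.mulVec_mulVec, hGl]
    ext i
    simp only [Pi.add_apply, Pi.zero_apply]
    exact h2 _
  · intro J γ hJ hne
    have hall : (Finset.univ.filter fun j : Fin m => (j : ℕ) < m) = Finset.univ := by
      ext j; simp [j.isLt]
    have hGm : HG.mulVec (∑ j : Fin m, u j) = v 0 + v (Fin.last m) := by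
      have := tele m le_rfl
      rw [hall] at this
      exact this
    have lhs : J.mulVec (u0 + Sᵀ.mulVec w) = J.mulVec u0 + γ.mulVec (v 0) := by
      rw [Matrix.mulVec_add, Matrix.mulVec_mulVec, hJ, ← Matrix.mulVec_mulVec, hGl]
    have rhs : J.mulVec u0 + (J * Sᵀ).mulVec (∑ j : Fin m, u j) + γ.mulVec (v (Fin.last m))
        = J.mulVec u0 + γ.mulVec (v 0) := by
      rw [hJ, ← Matrix.mulVec_mulVec, hGm, Matrix.mulVec_add]
      ext i
      simp only [Pi.add_apply]
      linear_combination h2 ((γ.mulVec (v (Fin.last m))) i)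
    rw [hwsum, lhs, ← rhs]
    exact hne
end
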